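/- arXiv:1707.02066 — 6 statements merged into one kernel-verified Lean document; each statement's English description precedes it below -/
import Mathlib

section
/- Let (G, X) be a self-similar group action and let M = X* ⋈ G be the associated Zappa–Szép product. Then two elements (u, g) and (v, h) of M are R-related (i.e. generate the same principal right ideal: (u, g)M = (v, h)M) if and only if u = v. Consequently, every R-class of M contains exactly one element of the form (u, 1) with u ∈ X*. -/
universe u v w

/-- A self-similar group action `(G, X)`: a group `G`, a set `X`, an action map
`G × X* → X*` and a restriction map `G × X* → G` satisfying (SS1)–(SS8). -/
structure SelfSimilarAction (G : Type u) [Group G] (X : Type v) where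
  act : G → FreeMonoid X → FreeMonoid X
  res : G → FreeMonoid X → G
  /-- (SS1) `1 · u = u` -/
  one_act : ∀ u : FreeMonoid X, act 1 u = u
  /-- (SS2) `(gh) · u = g · (h · u)` -/
  mul_act : ∀ (g h : G) (u : FreeMonoid X), act (g * h) u = act g (act h u)
  /-- (SS3) `g · 1 = 1` -/
  act_one : ∀ g : G, act g 1 = 1
  /-- (SS4) `g · (uv) = (g · u)((g|_u) · v)` -/
  act_mul : ∀ (g : G) (u v : FreeMonoid X), act g (u * v) = act g u * act (res g u) v
  /-- (SS5) `g|_1 = g` -/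
  res_one : ∀ g : G, res g 1 = g
  /-- (SS6) `g|_{uv} = (g|_u)|_v` -/
  res_mul : ∀ (g : G) (u v : FreeMonoid X), res g (u * v) = res (res g u) v
  /-- (SS7) `1|_u = 1` -/
  one_res : ∀ u : FreeMonoid X, res 1 u = 1
  /-- (SS8) `(gh)|_u = (g|_{h·u})(h|_u)` -/
  mul_res : ∀ (g h : G) (u : FreeMonoid X), res (g * h) u = res g (act h u) * res h u

namespace SelfSimilarAction

variable {G : Type u} [Group G] {X : Type v}

/-- The Zappa–Szép product `X* ⋈ G`: underlying set `X* × G`. -/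
def ZS (A : SelfSimilarAction G X) : Type (max u v) := FreeMonoid X × G

/-- The element `(u, g)` of `X* ⋈ G`. -/
def pair (A : SelfSimilarAction G X) (u : FreeMonoid X) (g : G) : A.ZS := (u, g)

/-- The Zappa–Szép product `X* ⋈ G` is a monoid with multiplication
`(u, g)(v, h) = (u (g·v), (g|_v) h)` and identity `(1, 1)`. -/
instance (A : SelfSimilarAction G X) : Monoid A.ZS where
  mul p q := ((p.1 * A.act p.2 q.1, A.res p.2 q.1 * q.2) : FreeMonoid X × G)
  one := (((1 : FreeMonoid X), (1 : G)) : FreeMonoid X × G)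
  mul_assoc p q r := by
    show (((p.1 * A.act p.2 q.1) * A.act (A.res p.2 q.1 * q.2) r.1,
        A.res (A.res p.2 q.1 * q.2) r.1 * r.2) : FreeMonoid X × G) =
      ((p.1 * A.act p.2 (q.1 * A.act q.2 r.1),
        A.res p.2 (q.1 * A.act q.2 r.1) * (A.res q.2 r.1 * r.2)) : FreeMonoid X × G)
    rw [A.mul_act, A.act_mul, A.mul_res, A.res_mul, mul_assoc, mul_assoc]
  one_mul p := by
    show (((1 : FreeMonoid X) * A.act 1 p.1, A.res 1 p.1 * p.2) : FreeMonoid X × G) = p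
    rw [A.one_act, A.one_res, one_mul, one_mul]
    exact Prod.mk.eta
  mul_one p := by
    show ((p.1 * A.act p.2 1, A.res p.2 1 * 1) : FreeMonoid X × G) = p
    rw [A.act_one, A.res_one, mul_one, mul_one]
    exact Prod.mk.eta

end SelfSimilarAction

/-! The element `(u, g)` factors as `(u, 1)(1, g)`, and `g ↦ (1, g)` embeds `G` into the units
of `X* ⋈ G`, so `(u, g)` and `(u, 1)` generate the same right ideal. Conversely, every element
of `(u, g) M` has first coordinate in `u X*`; two words that are prefixes of each other coincide. -/

theorem Set.range_mul_left_mul_unit {M : Type*} [Monoid M] (a : M) {c : M} (hc : IsUnit c) :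
    Set.range ((a * c) * ·) = Set.range (a * ·) := by
  obtain ⟨c, rfl⟩ := hc
  ext x
  constructor
  · rintro ⟨m, rfl⟩
    exact ⟨c * m, (mul_assoc a c m).symm⟩
  · rintro ⟨m, rfl⟩
    exact ⟨↑c⁻¹ * m, by simp [mul_assoc]⟩

theorem Set.mem_range_mul_self {M : Type*} [Monoid M] (a : M) : a ∈ Set.range (a * ·) :=
  ⟨1, mul_one a⟩

theorem FreeMonoid.eq_of_dvd_of_dvd {α : Type*} {u v : FreeMonoid α} (huv : u ∣ v)
    (hvu : v ∣ u) : u = v := by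
  obtain ⟨a, rfl⟩ := huv
  obtain ⟨b, hb⟩ := hvu
  have hlen := congrArg FreeMonoid.length hb
  simp only [FreeMonoid.length_mul] at hlen
  have ha : a = 1 := FreeMonoid.length_eq_zero.mp (by omega)
  rw [ha, mul_one]

namespace SelfSimilarAction

variable {G : Type u} [Group G] {X : Type v} (A : SelfSimilarAction G X)

theorem pair_mul_pair (u w : FreeMonoid X) (g k : G) :
    A.pair u g * A.pair w k = A.pair (u * A.act g w) (A.res g w * k) :=
  rfl

theorem pair_one_mul_pair (u : FreeMonoid X) (g : G) :
    A.pair u 1 * A.pair 1 g = A.pair u g := by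
  rw [pair_mul_pair]
  exact congrArg₂ A.pair (by rw [A.act_one, mul_one]) (by rw [A.one_res, one_mul])

theorem pair_one_mul_pair_one (g h : G) : A.pair 1 g * A.pair 1 h = A.pair 1 (g * h) := by
  rw [pair_mul_pair]
  exact congrArg₂ A.pair (by rw [A.act_one, mul_one]) (by rw [A.res_one])

def pairOneHom : G →* A.ZS where
  toFun := A.pair 1
  map_one' := rfl
  map_mul' g h := (A.pair_one_mul_pair_one g h).symm

theorem isUnit_pair_one (g : G) : IsUnit (A.pair 1 g) :=
  (Group.isUnit g).map A.pairOneHom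

theorem range_pair_mul (u : FreeMonoid X) (g : G) :
    Set.range (A.pair u g * ·) = Set.range (A.pair u 1 * ·) := by
  rw [← pair_one_mul_pair, Set.range_mul_left_mul_unit _ (A.isUnit_pair_one g)]

theorem dvd_of_pair_mem_range_pair_mul {u w : FreeMonoid X} {g k : G}
    (hw : A.pair w k ∈ Set.range (A.pair u g * ·)) : u ∣ w := by
  obtain ⟨m, hm⟩ := hw
  exact ⟨A.act g m.1, (congrArg Prod.fst hm).symm⟩

theorem range_pair_mul_eq_iff (u v : FreeMonoid X) (g h : G) :
    Set.range (A.pair u g * ·) = Set.range (A.pair v h * ·) ↔ u = v := by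
  constructor
  · intro hr
    exact FreeMonoid.eq_of_dvd_of_dvd
      (A.dvd_of_pair_mem_range_pair_mul (hr.symm ▸ Set.mem_range_mul_self (A.pair v h)))
      (A.dvd_of_pair_mem_range_pair_mul (hr ▸ Set.mem_range_mul_self (A.pair u g)))
  · rintro rfl
    rw [range_pair_mul, A.range_pair_mul u h]

theorem range_mul_eq_range_pair_one_mul_iff (p : A.ZS) (w : FreeMonoid X) :
    Set.range (p * ·) = Set.range (A.pair w 1 * ·) ↔ p.1 = w :=
  A.range_pair_mul_eq_iff p.1 w p.2 1

end SelfSimilarAction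

/-- in `M = X* ⋈ G`, `(u,g)` and `(v,h)` are `R`-related (generate the same
principal right ideal) iff `u = v`; consequently every `R`-class contains exactly one
element of the form `(u, 1)`. -/
theorem stmt4 (G : Type u) [Group G] (X : Type v) (A : SelfSimilarAction G X) :
    (∀ (u v : FreeMonoid X) (g h : G),
      Set.range (fun m : A.ZS => A.pair u g * m) =
          Set.range (fun m : A.ZS => A.pair v h * m) ↔ u = v) ∧
    (∀ p : A.ZS, ∃! u : FreeMonoid X,
      Set.range (fun m : A.ZS => p * m) =
        Set.range (fun m : A.ZS => A.pair u 1 * m)) := by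
  refine ⟨A.range_pair_mul_eq_iff, fun p => ⟨p.1, ?_, fun w hw => ?_⟩⟩
  · exact (A.range_mul_eq_range_pair_one_mul_iff p p.1).mpr rfl
  · exact ((A.range_mul_eq_range_pair_one_mul_iff p w).mp hw).symm
end

section
/- Let (G, X) be a self-similar group action and let M = X* ⋈ G be the associated Zappa–Szép product. Writing |u| for the length of a word u ∈ X*: (i) if M(u, g)M ⊆ M(v, h)M then |v| ≤ |u|; (ii) (u, g) and (v, h) are J-related (i.e. M(u, g)M = M(v, h)M) if and only if u and v lie in the same orbit of the action of G on X*, i.e. there exists k ∈ G with k·u = v. -/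
universe u v w

namespace SelfSimilarAction

variable {G : Type u} [Group G] {X : Type v} (A : SelfSimilarAction G X)

lemma act_inv_act (g : G) (u : FreeMonoid X) : A.act g⁻¹ (A.act g u) = u := by
  rw [← A.mul_act, inv_mul_cancel, A.one_act]

lemma eq_one_of_act_eq_one {g : G} {u : FreeMonoid X} (h : A.act g u = 1) : u = 1 := by
  have := congrArg (A.act g⁻¹) h
  rwa [act_inv_act, A.act_one] at this

lemma length_le_length_act_aux :
    ∀ (n : ℕ) (u : FreeMonoid X), u.length ≤ n → ∀ g : G, u.length ≤ (A.act g u).length := by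
  intro n
  induction n with
  | zero => intro u hu g; omega
  | succ n ih =>
    intro u hu g
    rcases hl : u.toList with _ | ⟨x, t⟩
    · have : u = 1 := by
        have := congrArg FreeMonoid.ofList hl
        simpa using this
      simp [this, A.act_one]
    rcases ht : t with _ | ⟨y, s⟩
    · -- u is a single letter
      have h1 : u.length = 1 := by
        have := congrArg List.length hl
        simpa [FreeMonoid.length, ht] using this
      rw [h1]
      have : A.act g u ≠ 1 := by
        intro hh
        have h0 : u.length = 0 := FreeMonoid.length_eq_zero.mpr (A.eq_one_of_act_eq_one hh)
        omega
      have : (A.act g u).length ≠ 0 := fun hh => this (FreeMonoid.length_eq_zero.mp hh)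
      omega
    · -- u = of x * rest with rest nonempty
      subst ht
      have hu' : u = FreeMonoid.of x * FreeMonoid.ofList (y :: s) := by
        have := congrArg FreeMonoid.ofList hl
        simpa [FreeMonoid.ofList_cons] using this
      have hlen : u.length = 1 + (FreeMonoid.ofList (y :: s)).length := by
        rw [hu', FreeMonoid.length_mul, FreeMonoid.length_of]
      have hys : (FreeMonoid.ofList (y :: s) : FreeMonoid X).length = s.length + 1 := rfl
      rw [hu', A.act_mul, FreeMonoid.length_mul, FreeMonoid.length_mul, FreeMonoid.length_of]
      have h1 : (FreeMonoid.of x : FreeMonoid X).length ≤ n := by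
        rw [FreeMonoid.length_of]; omega
      have h2 : (FreeMonoid.ofList (y :: s) : FreeMonoid X).length ≤ n := by
        have := hu
        rw [hlen] at this
        omega
      have i1 := ih (FreeMonoid.of x) h1 g
      have i2 := ih (FreeMonoid.ofList (y :: s)) h2 (A.res g (FreeMonoid.of x))
      rw [FreeMonoid.length_of] at i1
      omega

lemma length_act (g : G) (u : FreeMonoid X) : (A.act g u).length = u.length := by
  have h1 := A.length_le_length_act_aux u.length u le_rfl g
  have h2 := A.length_le_length_act_aux (A.act g u).length (A.act g u) le_rfl g⁻¹
  rw [act_inv_act] at h2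
  omega

lemma mul_def (p q : A.ZS) :
    p * q = ((p.1 * A.act p.2 q.1, A.res p.2 q.1 * q.2) : FreeMonoid X × G) := rfl

lemma pair_fst (u : FreeMonoid X) (g : G) : (A.pair u g).1 = u := rfl
lemma pair_snd (u : FreeMonoid X) (g : G) : (A.pair u g).2 = g := rfl

lemma ideal_subset {M : Type w} [Monoid M] {a b : M} (h : ∃ m m' : M, m * a * m' = b) :
    {x : M | ∃ m m' : M, m * b * m' = x} ⊆ {x : M | ∃ m m' : M, m * a * m' = x} := by
  obtain ⟨n, n', rfl⟩ := h
  rintro x ⟨m, m', rfl⟩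
  exact ⟨m * n, n' * m', by simp [mul_assoc]⟩

lemma pair_mem {u v : FreeMonoid X} {g h : G} {k : G} (hk : A.act k u = v) :
    ∃ m m' : A.ZS, m * A.pair u g * m' = A.pair v h := by
  refine ⟨A.pair 1 k, A.pair 1 ((A.res k u * g)⁻¹ * h), ?_⟩
  rw [mul_def, mul_def]
  simp only [pair_fst, pair_snd, one_mul]
  rw [A.act_one, A.res_one, mul_one, hk]
  rw [mul_inv_cancel_left]
  rfl

end SelfSimilarAction

/-- in `M = X* ⋈ G`: (i) if `M(u,g)M ⊆ M(v,h)M` then `|v| ≤ |u|`;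
(ii) `(u,g)` and `(v,h)` are `J`-related iff `u` and `v` are in the same orbit of `G`. -/
theorem stmt5 (G : Type u) [Group G] (X : Type v) (A : SelfSimilarAction G X) :
    (∀ (u v : FreeMonoid X) (g h : G),
      {x : A.ZS | ∃ m m' : A.ZS, m * A.pair u g * m' = x} ⊆
        {x : A.ZS | ∃ m m' : A.ZS, m * A.pair v h * m' = x} →
      v.length ≤ u.length) ∧
    (∀ (u v : FreeMonoid X) (g h : G),
      {x : A.ZS | ∃ m m' : A.ZS, m * A.pair u g * m' = x} =
        {x : A.ZS | ∃ m m' : A.ZS, m * A.pair v h * m' = x} ↔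
      ∃ k : G, A.act k u = v) := by
  have key : ∀ (u v : FreeMonoid X) (g h : G),
      {x : A.ZS | ∃ m m' : A.ZS, m * A.pair u g * m' = x} ⊆
        {x : A.ZS | ∃ m m' : A.ZS, m * A.pair v h * m' = x} →
      ∃ (a b : FreeMonoid X) (k : G), u = a * A.act k v * b := by
    intro u v g h hsub
    have hm : A.pair u g ∈ {x : A.ZS | ∃ m m' : A.ZS, m * A.pair u g * m' = x} :=
      ⟨1, 1, by rw [one_mul, mul_one]⟩
    obtain ⟨m, m', hm'⟩ := hsub hm
    refine ⟨m.1, A.act (A.res m.2 v * h) m'.1, m.2, ?_⟩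
    have h1 := congrArg Prod.fst hm'
    rw [A.mul_def, A.mul_def] at h1
    exact h1.symm
  have keylen : ∀ (u v : FreeMonoid X),
      (∃ (a b : FreeMonoid X) (k : G), u = a * A.act k v * b) →
      v.length ≤ u.length := by
    rintro u v ⟨a, b, k, rfl⟩
    rw [FreeMonoid.length_mul, FreeMonoid.length_mul, A.length_act]
    omega
  constructor
  · intro u v g h hsub
    exact keylen u v (key u v g h hsub)
  · intro u v g h
    constructor
    · intro heq
      obtain ⟨a, b, k, hab⟩ := key u v g h (le_of_eq heq)
      obtain ⟨a', b', k', hab'⟩ := key v u h g (ge_of_eq heq)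
      have l1 := congrArg FreeMonoid.length hab
      have l2 := congrArg FreeMonoid.length hab'
      rw [FreeMonoid.length_mul, FreeMonoid.length_mul, A.length_act] at l1 l2
      have ha : a = 1 := FreeMonoid.length_eq_zero.mp (by omega)
      have hb : b = 1 := FreeMonoid.length_eq_zero.mp (by omega)
      rw [ha, hb, one_mul, mul_one] at hab
      exact ⟨k⁻¹, by rw [hab, A.act_inv_act]⟩
    · rintro ⟨k, rfl⟩
      apply Set.Subset.antisymm
      · exact SelfSimilarAction.ideal_subset (A.pair_mem (k := k⁻¹) (A.act_inv_act k u))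
      · exact SelfSimilarAction.ideal_subset (A.pair_mem (k := k) rfl)
end

section
/- Let G be a group, I a set, (H_i)_{i∈I} subgroups of G and ρ_i : H_i → G group homomorphisms, and let M be the associated monoid HNN-extension ⟨G, t_i (i ∈ I) | relations of G, h t_i = t_i ρ_i(h) for all h ∈ H_i⟩. Then M is a left Rees monoid: M is left cancellative, right rigid, and every principal right ideal of M is contained in only finitely many distinct principal right ideals. -/
universe u v

/-- The principal right ideal `aM` of a monoid. -/
def prIdeal {M : Type*} [Monoid M] (a : M) : Set M := Set.range fun m => a * m

/-- A left Rees monoid: a left cancellative, right rigid monoid in which every principal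
right ideal is contained in only finitely many distinct principal right ideals. -/
def IsLeftReesMonoid (M : Type*) [Monoid M] : Prop :=
  (∀ a b c : M, a * b = a * c → b = c) ∧
  (∀ a b : M, (prIdeal a ∩ prIdeal b).Nonempty →
    prIdeal a ⊆ prIdeal b ∨ prIdeal b ⊆ prIdeal a) ∧
  (∀ a : M, {S : Set M | (∃ b : M, S = prIdeal b) ∧ prIdeal a ⊆ S}.Finite)

/-- The defining relations of the monoid HNN-extension
`⟨G, tᵢ (i ∈ I) | relations of G, h tᵢ = tᵢ ρᵢ(h) for h ∈ Hᵢ⟩`. -/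
inductive HNNRel (G : Type u) [Group G] {I : Type v} (H : I → Subgroup G)
    (ρ : ∀ i, H i →* G) : FreeMonoid (G ⊕ I) → FreeMonoid (G ⊕ I) → Prop
  | mul (g h : G) : HNNRel G H ρ
      (FreeMonoid.of (Sum.inl g) * FreeMonoid.of (Sum.inl h))
      (FreeMonoid.of (Sum.inl (g * h)))
  | one : HNNRel G H ρ (FreeMonoid.of (Sum.inl (1 : G))) 1
  | hnn (i : I) (h : H i) : HNNRel G H ρ
      (FreeMonoid.of (Sum.inl (h : G)) * FreeMonoid.of (Sum.inr i))
      (FreeMonoid.of (Sum.inr i) * FreeMonoid.of (Sum.inl (ρ i h)))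

/-- The monoid HNN-extension of `G` with associated subgroups `Hᵢ`, homomorphisms `ρᵢ`
and stable letters `tᵢ`. -/
abbrev HNNMonoid (G : Type u) [Group G] {I : Type v} (H : I → Subgroup G)
    (ρ : ∀ i, H i →* G) :=
  (conGen (HNNRel G H ρ)).Quotient

/-!
Fix left coset representatives `c.out` of each `Hᵢ`. A group element `g` moves to the right past a
letter `c.out * tᵢ` by writing `g * c.out = (g • c).out * h` with `h ∈ Hᵢ` and then using
`h * tᵢ = tᵢ * ρᵢ h`. Pushing group elements through in this way makes the pairs (word of cosets,
element of `G`) a monoid `N`; sending each generator of `M` to its normal form gives `M →* N`, and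
evaluating pairs in `M` is a left inverse of it. In `N`, an element lies in the principal right
ideal of `a` exactly when its coset word has the word of `a` as a prefix; prefixes of a fixed word
form a finite chain, so `N` is left Rees, and left Rees monoids are closed under retracts.
-/

section LeftRees

variable {M N : Type*} [Monoid M] [Monoid N]

theorem prIdeal_subset_prIdeal_iff {a b : M} : prIdeal a ⊆ prIdeal b ↔ a ∈ prIdeal b :=
  ⟨fun h => h ⟨1, mul_one a⟩, by
    rintro ⟨c, rfl⟩ _ ⟨m, rfl⟩
    exact ⟨c * m, (mul_assoc b c m).symm⟩⟩

theorem IsLeftReesMonoid.of_prefix {α : Type*} (f : M → List α)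
    (hcancel : ∀ a b c : M, a * b = a * c → b = c)
    (hmem : ∀ a z : M, z ∈ prIdeal a ↔ f a <+: f z) : IsLeftReesMonoid M := by
  have hideal (a : M) : prIdeal a = {z | f a <+: f z} := Set.ext (hmem a)
  refine ⟨hcancel, ?_, fun a => ?_⟩
  · rintro a b ⟨z, hza, hzb⟩
    simp only [hideal, Set.ofPred_subset_ofPred]
    rcases List.prefix_or_prefix_of_prefix ((hmem a z).1 hza) ((hmem b z).1 hzb) with h | h
    exacts [Or.inr fun w hw => h.trans hw, Or.inl fun w hw => h.trans hw]
  · refine ((Set.finite_Iic (f a).length).image fun n => {z | (f a).take n <+: f z}).subset ?_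
    rintro S ⟨⟨b, rfl⟩, hab⟩
    have hba : f b <+: f a := (hmem b a).1 (prIdeal_subset_prIdeal_iff.1 hab)
    refine ⟨(f b).length, hba.length_le, ?_⟩
    dsimp only
    rw [← List.prefix_iff_eq_take.1 hba, hideal]

theorem prIdeal_eq_preimage {φ : M →* N} {ψ : N →* M} (h : Function.LeftInverse ψ φ) (a : M) :
    prIdeal a = φ ⁻¹' prIdeal (φ a) := by
  ext z
  constructor
  · rintro ⟨m, rfl⟩
    exact ⟨φ m, (map_mul φ a m).symm⟩
  · rintro ⟨n, hn⟩
    exact ⟨ψ n, by rw [← h z, ← hn, map_mul, h a]⟩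

theorem IsLeftReesMonoid.of_leftInverse (φ : M →* N) (ψ : N →* M)
    (h : Function.LeftInverse ψ φ) (hN : IsLeftReesMonoid N) : IsLeftReesMonoid M := by
  obtain ⟨hcancel, hrigid, hfinite⟩ := hN
  refine ⟨fun a b c hbc => h.injective (hcancel (φ a) _ _ (by rw [← map_mul, ← map_mul, hbc])),
    ?_, fun a => ?_⟩
  · rintro a b ⟨z, hza, hzb⟩
    simp only [prIdeal_eq_preimage h] at hza hzb ⊢
    exact (hrigid _ _ ⟨φ z, hza, hzb⟩).imp (Set.preimage_mono ·) (Set.preimage_mono ·)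
  · refine ((hfinite (φ a)).image (φ ⁻¹' ·)).subset ?_
    rintro S ⟨⟨b, rfl⟩, hab⟩
    refine ⟨prIdeal (φ b), ⟨⟨φ b, rfl⟩, ?_⟩, (prIdeal_eq_preimage h b).symm⟩
    rw [prIdeal_subset_prIdeal_iff, prIdeal_eq_preimage h b] at hab
    exact prIdeal_subset_prIdeal_iff.2 hab

end LeftRees

namespace QuotientGroup

variable {G : Type*} [Group G] {K : Subgroup G}

noncomputable def cosetCarry (g : G) (c : G ⧸ K) : K :=
  ⟨(g • c).out⁻¹ * (g * c.out), by
    rw [← QuotientGroup.eq, QuotientGroup.out_eq']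
    exact (MulAction.Quotient.coe_smul_out _ g c).symm⟩

theorem out_smul_mul_cosetCarry (g : G) (c : G ⧸ K) :
    (g • c).out * cosetCarry g c = g * c.out := by
  simp [cosetCarry]

theorem cosetCarry_mul (a b : G) (c : G ⧸ K) :
    cosetCarry (a * b) c = cosetCarry a (b • c) * cosetCarry b c := by
  ext
  simp only [cosetCarry, mul_smul, Subgroup.coe_mul]
  group

@[simp]
theorem cosetCarry_one (c : G ⧸ K) : cosetCarry (1 : G) c = 1 := by
  ext
  simp [cosetCarry]

variable (K) in
noncomputable def outMkOne : K :=
  ⟨(mk 1 : G ⧸ K).out, by simpa using QuotientGroup.eq.1 (out_eq' (mk 1 : G ⧸ K)).symm⟩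

theorem mk_coe_eq_mk_one (h : K) : (mk (h : G) : G ⧸ K) = mk 1 :=
  QuotientGroup.eq.2 (by simp)

theorem cosetCarry_mk_one (h : K) :
    cosetCarry (h : G) (mk 1 : G ⧸ K) = (outMkOne K)⁻¹ * h * outMkOne K := by
  ext
  simp [cosetCarry, mk_coe_eq_mk_one, outMkOne, mul_assoc]

end QuotientGroup

open QuotientGroup

namespace HNNMonoid

variable {G : Type u} [Group G] {I : Type v} {H : I → Subgroup G}

variable (H) in
abbrev Word := List (Σ i : I, G ⧸ H i)

/-- `⟨[⟨i₁, c₁⟩, …, ⟨iₙ, cₙ⟩], g⟩` stands for `c₁.out * tᵢ₁ * ⋯ * cₙ.out * tᵢₙ * g`. -/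
@[ext]
structure NormalForm (ρ : ∀ i, H i →* G) where
  word : Word H
  unit : G

variable (ρ : ∀ i, H i →* G)

/-- The normal form of `g` times the word `w`. -/
noncomputable def push (g : G) : Word H → NormalForm ρ
  | [] => ⟨[], g⟩
  | ⟨i, c⟩ :: w =>
    let p := push (ρ i (cosetCarry g c)) w
    ⟨⟨i, g • c⟩ :: p.word, p.unit⟩

@[simp]
theorem push_nil (g : G) : push ρ g [] = ⟨[], g⟩ := rfl

@[simp]
theorem push_cons (g : G) {i : I} (c : G ⧸ H i) (w : Word H) :
    push ρ g (⟨i, c⟩ :: w) =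
      ⟨⟨i, g • c⟩ :: (push ρ (ρ i (cosetCarry g c)) w).word,
        (push ρ (ρ i (cosetCarry g c)) w).unit⟩ := rfl

@[simp]
theorem push_one : ∀ w : Word H, push ρ 1 w = ⟨w, 1⟩
  | [] => rfl
  | ⟨i, c⟩ :: w => by simp [push_one w]

theorem push_mul (a b : G) : ∀ w : Word H,
    push ρ (a * b) w =
      ⟨(push ρ a (push ρ b w).word).word, (push ρ a (push ρ b w).word).unit * (push ρ b w).unit⟩
  | [] => rfl
  | ⟨i, c⟩ :: w => by simp [cosetCarry_mul, push_mul _ _ w, mul_smul]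

theorem push_append (g : G) : ∀ v w : Word H,
    push ρ g (v ++ w) =
      ⟨(push ρ g v).word ++ (push ρ (push ρ g v).unit w).word, (push ρ (push ρ g v).unit w).unit⟩
  | [], w => rfl
  | ⟨i, c⟩ :: v, w => by simp [push_append _ v w]

theorem word_push_push_inv (g : G) (w : Word H) :
    (push ρ g (push ρ g⁻¹ w).word).word = w := by
  simpa using congrArg NormalForm.word (push_mul ρ g g⁻¹ w).symm

namespace NormalForm

noncomputable instance : Mul (NormalForm ρ) :=
  ⟨fun a b => ⟨a.word ++ (push ρ a.unit b.word).word, (push ρ a.unit b.word).unit * b.unit⟩⟩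

instance : One (NormalForm ρ) := ⟨⟨[], 1⟩⟩

variable {ρ}

theorem mul_def (a b : NormalForm ρ) :
    a * b = ⟨a.word ++ (push ρ a.unit b.word).word, (push ρ a.unit b.word).unit * b.unit⟩ := rfl

theorem one_def : (1 : NormalForm ρ) = ⟨[], 1⟩ := rfl

noncomputable instance : Monoid (NormalForm ρ) where
  mul_assoc a b c := by simp [mul_def, push_mul, push_append, mul_assoc]
  one_mul a := by simp [mul_def, one_def]
  mul_one a := by simp [mul_def, one_def]

theorem mul_left_cancel {a b c : NormalForm ρ} (h : a * b = a * c) : b = c := by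
  rw [mul_def, mul_def, NormalForm.mk.injEq, List.append_cancel_left_eq] at h
  obtain ⟨hword, hunit⟩ := h
  have hbc : b.word = c.word := by
    rw [← word_push_push_inv ρ a.unit⁻¹ b.word, ← word_push_push_inv ρ a.unit⁻¹ c.word, inv_inv,
      hword]
  rw [hbc] at hunit
  exact NormalForm.ext hbc (_root_.mul_left_cancel hunit)

theorem mem_prIdeal_iff {a z : NormalForm ρ} : z ∈ prIdeal a ↔ a.word <+: z.word := by
  constructor
  · rintro ⟨m, rfl⟩
    exact ⟨_, rfl⟩
  · rintro ⟨v, hv⟩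
    let p := push ρ a.unit⁻¹ v
    refine ⟨⟨p.word, (push ρ a.unit p.word).unit⁻¹ * z.unit⟩, ?_⟩
    change a * _ = z
    rw [mul_def, word_push_push_inv, hv, mul_inv_cancel_left]

theorem isLeftReesMonoid : IsLeftReesMonoid (NormalForm ρ) :=
  .of_prefix word (fun _ _ _ => mul_left_cancel) fun _ _ => mem_prIdeal_iff

end NormalForm

def of : G →* HNNMonoid G H ρ where
  toFun g := PresentedMonoid.of _ (Sum.inl g)
  map_one' := PresentedMonoid.mk_eq_mk_of_rel HNNRel.one
  map_mul' g h := (PresentedMonoid.mk_eq_mk_of_rel (HNNRel.mul g h)).symm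

def t (i : I) : HNNMonoid G H ρ := PresentedMonoid.of _ (Sum.inr i)

theorem of_mul_t {i : I} (h : H i) : of ρ h * t ρ i = t ρ i * of ρ (ρ i h) :=
  PresentedMonoid.mk_eq_mk_of_rel (HNNRel.hnn i h)

noncomputable def evalWord (w : Word H) : HNNMonoid G H ρ :=
  (w.map fun x => of ρ x.2.out * t ρ x.1).prod

@[simp]
theorem evalWord_nil : evalWord ρ [] = 1 := rfl

@[simp]
theorem evalWord_cons {i : I} (c : G ⧸ H i) (w : Word H) :
    evalWord ρ (⟨i, c⟩ :: w) = of ρ c.out * t ρ i * evalWord ρ w := by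
  simp [evalWord]

theorem evalWord_append (v w : Word H) : evalWord ρ (v ++ w) = evalWord ρ v * evalWord ρ w := by
  simp [evalWord]

theorem of_mul_evalWord (g : G) : ∀ w : Word H,
    of ρ g * evalWord ρ w = evalWord ρ (push ρ g w).word * of ρ (push ρ g w).unit
  | [] => by simp
  | ⟨i, c⟩ :: w => by
    have hcarry : of ρ g * of ρ c.out = of ρ (g • c).out * of ρ (cosetCarry g c) := by
      rw [← map_mul, ← map_mul, out_smul_mul_cosetCarry]
    calc of ρ g * evalWord ρ (⟨i, c⟩ :: w)
        = of ρ (g • c).out * ((of ρ (cosetCarry g c) * t ρ i) * evalWord ρ w) := by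
          rw [evalWord_cons, ← mul_assoc, ← mul_assoc, hcarry]; simp only [mul_assoc]
      _ = of ρ (g • c).out * t ρ i * (of ρ (ρ i (cosetCarry g c)) * evalWord ρ w) := by
          rw [of_mul_t]; simp only [mul_assoc]
      _ = evalWord ρ (push ρ g (⟨i, c⟩ :: w)).word * of ρ (push ρ g (⟨i, c⟩ :: w)).unit := by
          rw [of_mul_evalWord _ w]; simp only [push_cons, evalWord_cons, mul_assoc]

namespace NormalForm

noncomputable def eval : NormalForm ρ →* HNNMonoid G H ρ where
  toFun p := evalWord ρ p.word * of ρ p.unit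
  map_one' := by simp [one_def]
  map_mul' a b := calc
    evalWord ρ (a * b).word * of ρ (a * b).unit
        = evalWord ρ a.word * ((evalWord ρ (push ρ a.unit b.word).word
            * of ρ (push ρ a.unit b.word).unit) * of ρ b.unit) := by
          rw [mul_def, evalWord_append, map_mul]; simp only [mul_assoc]
      _ = evalWord ρ a.word * of ρ a.unit * (evalWord ρ b.word * of ρ b.unit) := by
          rw [← of_mul_evalWord]; simp only [mul_assoc]

@[simp]
theorem eval_mk (w : Word H) (g : G) : eval ρ ⟨w, g⟩ = evalWord ρ w * of ρ g := rfl

end NormalForm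

/-- The representative `(mk 1).out` of `Hᵢ` need not be `1`, so the normal form of `tᵢ` carries
the correction `(ρᵢ (mk 1).out)⁻¹`. -/
noncomputable def toNormalForm : HNNMonoid G H ρ →* NormalForm ρ :=
  PresentedMonoid.lift (Sum.elim (fun g => ⟨[], g⟩)
    fun i => ⟨[⟨i, QuotientGroup.mk 1⟩], (ρ i (outMkOne (H i)))⁻¹⟩) <| by
    rintro _ _ (⟨g, h⟩ | _ | ⟨i, h⟩)
    · rfl
    · rfl
    · simp [NormalForm.mul_def, mk_coe_eq_mk_one, cosetCarry_mk_one]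

@[simp]
theorem toNormalForm_of (g : G) : toNormalForm ρ (of ρ g) = ⟨[], g⟩ := rfl

@[simp]
theorem toNormalForm_t (i : I) :
    toNormalForm ρ (t ρ i) = ⟨[⟨i, QuotientGroup.mk 1⟩], (ρ i (outMkOne (H i)))⁻¹⟩ := rfl

theorem eval_toNormalForm : Function.LeftInverse (NormalForm.eval ρ) (toNormalForm ρ) := by
  have hcomp : (NormalForm.eval ρ).comp (toNormalForm ρ) = MonoidHom.id _ := by
    ext (g | i)
    · change NormalForm.eval ρ (toNormalForm ρ (of ρ g)) = of ρ g
      simp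
    · change NormalForm.eval ρ (toNormalForm ρ (t ρ i)) = t ρ i
      have hout : of ρ (QuotientGroup.mk 1 : G ⧸ H i).out = of ρ (outMkOne (H i) : G) := rfl
      simp [hout, of_mul_t, mul_assoc, ← map_mul]
  exact DFunLike.congr_fun hcomp

end HNNMonoid

/-- every monoid HNN-extension of a group (with subgroups as associated
submonoids) is a left Rees monoid. -/
theorem stmt7 (G : Type u) [Group G] {I : Type v} (H : I → Subgroup G)
    (ρ : ∀ i, H i →* G) : IsLeftReesMonoid (HNNMonoid G H ρ) :=
  .of_leftInverse _ _ (HNNMonoid.eval_toNormalForm ρ) HNNMonoid.NormalForm.isLeftReesMonoid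
end

section
/- Every Rees monoid embeds in a group: if M is a cancellative, right rigid monoid in which every principal right ideal is contained in only finitely many distinct principal right ideals, then there exist a group Γ and an injective monoid homomorphism M → Γ. -/
universe u

namespace Rees

structure Hyp (M : Type u) [Monoid M] : Prop where
  lc : ∀ a b c : M, a * b = a * c → b = c
  rc : ∀ a b c : M, b * a = c * a → b = c
  rigid : ∀ a b : M, (prIdeal a ∩ prIdeal b).Nonempty →
      prIdeal a ⊆ prIdeal b ∨ prIdeal b ⊆ prIdeal a
  fin : ∀ a : M, {S : Set M | (∃ b : M, S = prIdeal b) ∧ prIdeal a ⊆ S}.Finite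

variable {M : Type u} [Monoid M]

/-- right divisibility: `a = c * d` for some `c`. -/
def RD (d a : M) : Prop := ∃ c, a = c * d

lemma RD.refl (d : M) : RD d d := ⟨1, (one_mul d).symm⟩

lemma RD.mul_left (m : M) {d a : M} (h : RD d a) : RD d (m * a) := by
  obtain ⟨c, rfl⟩ := h; exact ⟨m * c, (mul_assoc ..).symm⟩

lemma RD.trans {d e a : M} (h1 : RD d e) (h2 : RD e a) : RD d a := by
  obtain ⟨c, rfl⟩ := h1; obtain ⟨c2, rfl⟩ := h2
  exact ⟨c2 * c, (mul_assoc ..).symm⟩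

lemma rd_mul_self (c d : M) : RD d (c * d) := ⟨c, rfl⟩

lemma mem_prIdeal {a x : M} : x ∈ prIdeal a ↔ ∃ c, x = a * c := by
  constructor <;> rintro ⟨c, hc⟩ <;> exact ⟨c, hc.symm⟩

lemma self_mem_prIdeal (a : M) : a ∈ prIdeal a := ⟨1, mul_one a⟩

lemma prIdeal_subset_iff {a b : M} : prIdeal a ⊆ prIdeal b ↔ b ∣ a := by
  constructor
  · intro h
    obtain ⟨c, hc⟩ := mem_prIdeal.1 (h (self_mem_prIdeal a))
    exact ⟨c, hc⟩
  · rintro ⟨c, rfl⟩ x hx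
    obtain ⟨m, hm⟩ := mem_prIdeal.1 hx
    exact mem_prIdeal.2 ⟨c * m, by rw [hm, mul_assoc]⟩

section Basic
variable (H : Hyp M)
include H

/-- In a cancellative monoid a one–sided inverse is two–sided. -/
lemma units_pair {a b : M} (h : a * b = 1) : IsUnit a ∧ IsUnit b := by
  have hba : b * a = 1 := by
    have : a * (b * a) = a * 1 := by
      rw [mul_one, ← mul_assoc, h, one_mul]
    exact H.lc _ _ _ this
  exact ⟨isUnit_iff_exists.2 ⟨b, h, hba⟩, isUnit_iff_exists.2 ⟨a, hba, h⟩⟩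

lemma isUnit_left {a b : M} (h : IsUnit (a * b)) : IsUnit a := by
  obtain ⟨c, hc, -⟩ := isUnit_iff_exists.1 h
  rw [mul_assoc] at hc
  exact (units_pair H hc).1

lemma isUnit_right {a b : M} (h : IsUnit (a * b)) : IsUnit b := by
  obtain ⟨c, -, hc⟩ := isUnit_iff_exists.1 h
  rw [← mul_assoc] at hc
  exact (units_pair H hc).2

lemma comp (a : M) {d e : M} (hd : d ∣ a) (he : e ∣ a) : d ∣ e ∨ e ∣ d := by
  have h1 : a ∈ prIdeal d ∩ prIdeal e := by
    obtain ⟨x, rfl⟩ := hd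
    obtain ⟨y, hy⟩ := he
    exact ⟨⟨x, rfl⟩, ⟨y, hy.symm⟩⟩
  rcases H.rigid d e ⟨a, h1⟩ with h | h
  · exact Or.inr (prIdeal_subset_iff.1 h)
  · exact Or.inl (prIdeal_subset_iff.1 h)

lemma rcomp (a : M) {d e : M} (hd : RD d a) (he : RD e a) : RD d e ∨ RD e d := by
  obtain ⟨x, hx⟩ := hd
  obtain ⟨y, hy⟩ := he
  rcases comp H a ⟨d, hx⟩ ⟨e, hy⟩ with ⟨z, hz⟩ | ⟨z, hz⟩
  · right
    exact ⟨z, H.lc x d (z * e) (by rw [← hx, hy, hz, mul_assoc])⟩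
  · left
    exact ⟨z, H.lc y e (z * d) (by rw [← hy, hx, hz, mul_assoc])⟩

lemma dvd_dvd_unit {d e : M} (h1 : d ∣ e) (h2 : e ∣ d) : ∃ u, IsUnit u ∧ e = d * u := by
  obtain ⟨u, rfl⟩ := h1
  obtain ⟨v, hv⟩ := h2
  rw [mul_assoc] at hv
  have huv : u * v = 1 := H.lc d _ _ (by rw [mul_one]; exact hv.symm)
  exact ⟨u, (units_pair H huv).1, rfl⟩

lemma rd_rd_unit {d e : M} (h1 : RD d e) (h2 : RD e d) : ∃ u, IsUnit u ∧ e = u * d := by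
  obtain ⟨u, rfl⟩ := h1
  obtain ⟨v, hv⟩ := h2
  rw [← mul_assoc] at hv
  have hvu : v * u = 1 := H.rc d _ _ (by rw [one_mul]; exact hv.symm)
  exact ⟨u, (units_pair H hvu).2, rfl⟩

end Basic

section UnitsApi
variable (H : Hyp M)

noncomputable def uinv {y : M} (h : IsUnit y) : M := ↑h.unit⁻¹

@[simp] lemma mul_uinv {y : M} (h : IsUnit y) : y * uinv h = 1 := by
  have := h.unit.mul_inv
  simpa [uinv, IsUnit.unit_spec] using this

@[simp] lemma uinv_mul {y : M} (h : IsUnit y) : uinv h * y = 1 := by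
  have := h.unit.inv_mul
  simpa [uinv, IsUnit.unit_spec] using this

lemma uinv_unit {y : M} (h : IsUnit y) : IsUnit (uinv h) := by
  exact isUnit_iff_exists.2 ⟨y, uinv_mul h, mul_uinv h⟩

include H

lemma eq_uinv_of_mul_right {y x : M} (h : IsUnit y) (hx : y * x = 1) : x = uinv h :=
  H.lc y x (uinv h) (by rw [hx, mul_uinv])

lemma eq_uinv_of_mul_left {y x : M} (h : IsUnit y) (hx : x * y = 1) : x = uinv h :=
  H.rc y x (uinv h) (by rw [hx, uinv_mul])

lemma uinv_mul_rev {x y : M} (hx : IsUnit x) (hy : IsUnit y) (hxy : IsUnit (x * y)) :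
    uinv hxy = uinv hy * uinv hx := by
  apply (eq_uinv_of_mul_right H hxy _).symm
  rw [mul_assoc, ← mul_assoc y, mul_uinv, one_mul, mul_uinv]

end UnitsApi

section Nu
variable (H : Hyp M)

/-- number of principal right ideals containing `aM`. -/
noncomputable def nu (a : M) : ℕ :=
  {S : Set M | (∃ b : M, S = prIdeal b) ∧ prIdeal a ⊆ S}.ncard

include H

lemma nu_le {a b : M} (h : b ∣ a) : nu b ≤ nu a := by
  apply Set.ncard_le_ncard _ (H.fin a)
  intro S hS
  exact ⟨hS.1, (prIdeal_subset_iff.2 h).trans hS.2⟩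

lemma nu_lt {a b : M} (h : b ∣ a) (h2 : ¬ a ∣ b) : nu b < nu a := by
  apply Set.ncard_lt_ncard _ (H.fin a)
  constructor
  · intro S hS
    exact ⟨hS.1, (prIdeal_subset_iff.2 h).trans hS.2⟩
  · intro hcon
    have : prIdeal a ∈ {S : Set M | (∃ b : M, S = prIdeal b) ∧ prIdeal a ⊆ S} :=
      ⟨⟨a, rfl⟩, subset_rfl⟩
    have h3 := (hcon this).2
    exact h2 (prIdeal_subset_iff.1 h3)

lemma gcdL_exists (a b : M) :
    ∃ d, d ∣ a ∧ d ∣ b ∧ ∀ e, e ∣ a → e ∣ b → e ∣ d := by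
  classical
  set K : Set ℕ := {k | ∃ d : M, d ∣ a ∧ d ∣ b ∧ nu d = k} with hK
  have hne : K.Nonempty := ⟨nu 1, 1, one_dvd _, one_dvd _, rfl⟩
  have hbdd : BddAbove K := by
    refine ⟨nu a, ?_⟩
    rintro k ⟨d, hd, -, rfl⟩
    exact nu_le H hd
  obtain ⟨d, hda, hdb, hnd⟩ := Nat.sSup_mem hne hbdd
  refine ⟨d, hda, hdb, fun e hea heb => ?_⟩
  rcases comp H a hda hea with hde | hed
  · by_contra hcon
    have h1 : nu d < nu e := nu_lt H hde (fun h => hcon h)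
    have h2 : nu e ≤ sSup K := le_csSup hbdd ⟨e, hea, heb, rfl⟩
    omega
  · exact hed

lemma gcdR_exists (a b : M) :
    ∃ d, RD d a ∧ RD d b ∧ ∀ e, RD e a → RD e b → RD e d := by
  classical
  set K : Set ℕ := {k | ∃ d x : M, a = x * d ∧ RD d b ∧ nu x = k} with hK
  have hne : K.Nonempty := ⟨nu a, 1, a, (mul_one a).symm, ⟨b, (mul_one b).symm⟩, rfl⟩
  obtain ⟨d, x, hxd, hdb, hnx⟩ := Nat.sInf_mem hne
  refine ⟨d, ⟨x, hxd⟩, hdb, fun e hea heb => ?_⟩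
  rcases rcomp H a hea ⟨x, hxd⟩ with hed | hde
  · exact hed
  · -- e = z * d
    obtain ⟨z, hz⟩ := hde
    obtain ⟨x', hx'⟩ := hea
    -- a = x*d and a = x'*e = x'*z*d, so x = x'*z
    have hxz : x = x' * z := by
      apply H.rc d
      rw [← hxd, hx', hz, mul_assoc]
    have h1 : nu x ≤ nu x' := by
      rw [hnx]; exact Nat.sInf_le ⟨e, x', hx', heb, rfl⟩
    by_cases h2 : x ∣ x'
    · obtain ⟨w, hw⟩ := h2
      have hz1 : w * z = 1 := by
        apply H.lc x
        rw [mul_one, ← mul_assoc, ← hw, ← hxz]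
      have hzu := (units_pair H hz1).2
      refine ⟨uinv hzu, ?_⟩
      rw [hz, ← mul_assoc, uinv_mul hzu, one_mul]
    · have : nu x' < nu x := nu_lt H ⟨z, hxz⟩ h2
      omega

end Nu




section Quotients

lemma lq_aux (d a : M) : ∃ x, d ∣ a → a = d * x := by
  by_cases h : d ∣ a
  · exact ⟨h.choose, fun _ => h.choose_spec⟩
  · exact ⟨1, fun hc => absurd hc h⟩

lemma rq_aux (d a : M) : ∃ x, RD d a → a = x * d := by
  by_cases h : RD d a
  · exact ⟨h.choose, fun _ => h.choose_spec⟩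
  · exact ⟨1, fun hc => absurd hc h⟩

/-- the left quotient: if `d ∣ a` then `a = d * lq d a`. -/
noncomputable def lq (d a : M) : M := (lq_aux d a).choose

/-- the right quotient: if `RD d a` then `a = rq d a * d`. -/
noncomputable def rq (d a : M) : M := (rq_aux d a).choose

lemma lq_spec {d a : M} (h : d ∣ a) : a = d * lq d a := (lq_aux d a).choose_spec h

lemma rq_spec {d a : M} (h : RD d a) : a = rq d a * d := (rq_aux d a).choose_spec h

variable (H : Hyp M)
include H

lemma lq_unique {d a x : M} (h : d ∣ a) (hx : a = d * x) : lq d a = x :=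
  H.lc d _ _ (by rw [← lq_spec h, hx])

lemma rq_unique {d a x : M} (h : RD d a) (hx : a = x * d) : rq d a = x :=
  H.rc d _ _ (by rw [← rq_spec h, hx])

end Quotients

section Transversal

/-- left-unit-multiplication equivalence -/
def sL (M : Type u) [Monoid M] : Setoid M where
  r a b := ∃ u, IsUnit u ∧ b = u * a
  iseqv := by
    refine ⟨fun a => ⟨1, isUnit_one, (one_mul a).symm⟩, ?_, ?_⟩
    · rintro a b ⟨u, hu, rfl⟩
      exact ⟨uinv hu, uinv_unit hu, by rw [← mul_assoc, uinv_mul hu, one_mul]⟩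
    · rintro a b c ⟨u, hu, rfl⟩ ⟨v, hv, rfl⟩
      exact ⟨v * u, hv.mul hu, (mul_assoc ..).symm⟩

/-- right-unit-multiplication equivalence -/
def sR (M : Type u) [Monoid M] : Setoid M where
  r a b := ∃ u, IsUnit u ∧ b = a * u
  iseqv := by
    refine ⟨fun a => ⟨1, isUnit_one, (mul_one a).symm⟩, ?_, ?_⟩
    · rintro a b ⟨u, hu, rfl⟩
      exact ⟨uinv hu, uinv_unit hu, by rw [mul_assoc, mul_uinv hu, mul_one]⟩
    · rintro a b c ⟨u, hu, rfl⟩ ⟨v, hv, rfl⟩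
      exact ⟨u * v, hu.mul hv, (mul_assoc ..)⟩

noncomputable def cL (a : M) : M := (@Quotient.mk M (sL M) a).out

noncomputable def cR (a : M) : M := (@Quotient.mk M (sR M) a).out

lemma cL_rel (a : M) : ∃ u, IsUnit u ∧ a = u * cL a := @Quotient.mk_out M (sL M) a

lemma cR_rel (a : M) : ∃ u, IsUnit u ∧ a = cR a * u := @Quotient.mk_out M (sR M) a

lemma cL_mul_unit {u : M} (a : M) (hu : IsUnit u) : cL (u * a) = cL a := by
  have : (@Quotient.mk M (sL M) (u * a)) = (@Quotient.mk M (sL M) a) :=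
    Quotient.sound ⟨uinv hu, uinv_unit hu, by rw [← mul_assoc, uinv_mul hu, one_mul]⟩
  unfold cL; rw [this]

lemma cR_mul_unit {u : M} (a : M) (hu : IsUnit u) : cR (a * u) = cR a := by
  have : (@Quotient.mk M (sR M) (a * u)) = (@Quotient.mk M (sR M) a) :=
    Quotient.sound ⟨uinv hu, uinv_unit hu, by rw [mul_assoc, mul_uinv hu, mul_one]⟩
  unfold cR; rw [this]

lemma cL_idem (a : M) : cL (cL a) = cL a := by
  obtain ⟨u, hu, he⟩ := cL_rel a
  conv_lhs => rw [← cL_mul_unit (cL a) hu]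
  rw [← he]

lemma cR_idem (a : M) : cR (cR a) = cR a := by
  obtain ⟨u, hu, he⟩ := cR_rel a
  conv_lhs => rw [← cR_mul_unit (cR a) hu]
  rw [← he]

lemma cL_rel' (a : M) : ∃ u, IsUnit u ∧ cL a = u * a := by
  obtain ⟨u, hu, he⟩ := cL_rel a
  refine ⟨uinv hu, uinv_unit hu, ?_⟩
  conv_rhs => rw [he]
  rw [← mul_assoc, uinv_mul hu, one_mul]

lemma cR_rel' (a : M) : ∃ u, IsUnit u ∧ cR a = a * u := by
  obtain ⟨u, hu, he⟩ := cR_rel a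
  refine ⟨uinv hu, uinv_unit hu, ?_⟩
  conv_rhs => rw [he]
  rw [mul_assoc, mul_uinv hu, mul_one]

noncomputable def twL (a : M) : M := (cL_rel' a).choose

noncomputable def twR (a : M) : M := (cR_rel' a).choose

lemma twL_unit (a : M) : IsUnit (twL a) := (cL_rel' a).choose_spec.1

lemma twR_unit (a : M) : IsUnit (twR a) := (cR_rel' a).choose_spec.1

lemma twL_spec (a : M) : cL a = twL a * a := (cL_rel' a).choose_spec.2

lemma twR_spec (a : M) : cR a = a * twR a := (cR_rel' a).choose_spec.2

lemma isUnit_cL {a : M} (h : IsUnit a) : IsUnit (cL a) := by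
  obtain ⟨u, hu, he⟩ := cL_rel' a
  rw [he]; exact hu.mul h

lemma isUnit_cR {a : M} (h : IsUnit a) : IsUnit (cR a) := by
  obtain ⟨u, hu, he⟩ := cR_rel' a
  rw [he]; exact h.mul hu

lemma isUnit_of_cL {a : M} (h : IsUnit (cL a)) : IsUnit a := by
  obtain ⟨u, hu, he⟩ := cL_rel a
  rw [he]; exact hu.mul h

lemma isUnit_of_cR {a : M} (h : IsUnit (cR a)) : IsUnit a := by
  obtain ⟨u, hu, he⟩ := cR_rel a
  rw [he]; exact h.mul hu

end Transversal

section Gcd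
variable (H : Hyp M)

/-- canonical right gcd (normalized so that `cL` fixes it) -/
noncomputable def cgcdR (a b : M) : M := cL (gcdR_exists H a b).choose

/-- canonical left gcd (normalized so that `cR` fixes it) -/
noncomputable def cgcdL (a b : M) : M := cR (gcdL_exists H a b).choose

lemma cgcdR_rd1 (a b : M) : RD (cgcdR H a b) a := by
  obtain ⟨h1, h2, h3⟩ := (gcdR_exists H a b).choose_spec
  obtain ⟨u, hu, he⟩ := cL_rel' (gcdR_exists H a b).choose
  obtain ⟨x, hx⟩ := h1
  exact ⟨x * uinv hu, by
    rw [cgcdR, he, ← mul_assoc, mul_assoc x, uinv_mul hu, mul_one]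
    exact hx⟩

lemma cgcdR_rd2 (a b : M) : RD (cgcdR H a b) b := by
  obtain ⟨h1, h2, h3⟩ := (gcdR_exists H a b).choose_spec
  obtain ⟨u, hu, he⟩ := cL_rel' (gcdR_exists H a b).choose
  obtain ⟨x, hx⟩ := h2
  exact ⟨x * uinv hu, by
    rw [cgcdR, he, ← mul_assoc, mul_assoc x, uinv_mul hu, mul_one]
    exact hx⟩

lemma cgcdR_max {a b : M} {e : M} (h1 : RD e a) (h2 : RD e b) : RD e (cgcdR H a b) := by
  obtain ⟨g1, g2, g3⟩ := (gcdR_exists H a b).choose_spec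
  obtain ⟨u, hu, he⟩ := cL_rel' (gcdR_exists H a b).choose
  obtain ⟨c, hc⟩ := g3 e h1 h2
  exact ⟨u * c, by rw [cgcdR, he, hc, mul_assoc]⟩

lemma cgcdR_cL (a b : M) : cL (cgcdR H a b) = cgcdR H a b := by
  rw [cgcdR, cL_idem]

lemma cgcdL_d1 (a b : M) : (cgcdL H a b) ∣ a := by
  obtain ⟨h1, h2, h3⟩ := (gcdL_exists H a b).choose_spec
  obtain ⟨u, hu, he⟩ := cR_rel' (gcdL_exists H a b).choose
  obtain ⟨x, hx⟩ := h1
  exact ⟨uinv hu * x, by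
    rw [cgcdL, he, mul_assoc, ← mul_assoc u, mul_uinv hu, one_mul]
    exact hx⟩

lemma cgcdL_d2 (a b : M) : (cgcdL H a b) ∣ b := by
  obtain ⟨h1, h2, h3⟩ := (gcdL_exists H a b).choose_spec
  obtain ⟨u, hu, he⟩ := cR_rel' (gcdL_exists H a b).choose
  obtain ⟨x, hx⟩ := h2
  exact ⟨uinv hu * x, by
    rw [cgcdL, he, mul_assoc, ← mul_assoc u, mul_uinv hu, one_mul]
    exact hx⟩

lemma cgcdL_max {a b : M} {e : M} (h1 : e ∣ a) (h2 : e ∣ b) : e ∣ (cgcdL H a b) := by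
  obtain ⟨g1, g2, g3⟩ := (gcdL_exists H a b).choose_spec
  obtain ⟨u, hu, he⟩ := cR_rel' (gcdL_exists H a b).choose
  obtain ⟨c, hc⟩ := g3 e h1 h2
  exact ⟨c * u, by rw [cgcdL, he, hc, mul_assoc]⟩

lemma cgcdL_cR (a b : M) : cR (cgcdL H a b) = cgcdL H a b := by
  rw [cgcdL, cR_idem]

/-- uniqueness of the canonical right gcd -/
lemma cgcdR_unique {a b s : M} (h1 : RD s a) (h2 : RD s b)
    (h3 : ∀ e, RD e a → RD e b → RD e s) (h4 : cL s = s) : cgcdR H a b = s := by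
  have hd1 : RD (cgcdR H a b) s := h3 _ (cgcdR_rd1 H a b) (cgcdR_rd2 H a b)
  have hd2 : RD s (cgcdR H a b) := cgcdR_max H h1 h2
  obtain ⟨u, hu, he⟩ := rd_rd_unit H hd2 hd1
  rw [← cgcdR_cL H a b, he, cL_mul_unit _ hu, h4]

/-- uniqueness of the canonical left gcd -/
lemma cgcdL_unique {a b s : M} (h1 : s ∣ a) (h2 : s ∣ b)
    (h3 : ∀ e, e ∣ a → e ∣ b → e ∣ s) (h4 : cR s = s) : cgcdL H a b = s := by
  have hd1 : (cgcdL H a b) ∣ s := h3 _ (cgcdL_d1 H a b) (cgcdL_d2 H a b)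
  have hd2 : s ∣ (cgcdL H a b) := cgcdL_max H h1 h2
  obtain ⟨u, hu, he⟩ := dvd_dvd_unit H hd2 hd1
  rw [← cgcdL_cR H a b, he, cR_mul_unit _ hu, h4]

end Gcd

attribute [local instance] Classical.propDecidable

section Triv

/-- no common nontrivial right divisor -/
def trivR (a b : M) : Prop := ∀ t, RD t a → RD t b → IsUnit t

/-- no common nontrivial left divisor -/
def trivL (b a : M) : Prop := ∀ t, t ∣ b → t ∣ a → IsUnit t

lemma rd_of_unit {t : M} (a : M) (h : IsUnit t) : RD t a :=
  ⟨a * uinv h, by rw [mul_assoc, uinv_mul h, mul_one]⟩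

lemma dvd_of_unit {t : M} (a : M) (h : IsUnit t) : t ∣ a :=
  ⟨uinv h * a, by rw [← mul_assoc, mul_uinv h, one_mul]⟩

lemma rd_unit_left {u t a : M} (hu : IsUnit u) : RD t (u * a) ↔ RD t a := by
  constructor
  · rintro ⟨c, hc⟩
    refine ⟨uinv hu * c, ?_⟩
    rw [mul_assoc, ← hc, ← mul_assoc, uinv_mul hu, one_mul]
  · rintro ⟨c, rfl⟩
    exact ⟨u * c, (mul_assoc ..).symm⟩

lemma dvd_unit_right {u t b : M} (hu : IsUnit u) : t ∣ b * u ↔ t ∣ b := by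
  constructor
  · rintro ⟨c, hc⟩
    refine ⟨c * uinv hu, ?_⟩
    rw [← mul_assoc, ← hc, mul_assoc, mul_uinv hu, mul_one]
  · rintro ⟨c, rfl⟩
    exact ⟨c * u, (mul_assoc ..)⟩

lemma trivR_unit_left {u a b : M} (hu : IsUnit u) (h : trivR a b) : trivR (u * a) b :=
  fun t h1 h2 => h t ((rd_unit_left hu).1 h1) h2

lemma trivR_unit_left2 {u a b : M} (hu : IsUnit u) (h : trivR a b) : trivR a (u * b) :=
  fun t h1 h2 => h t h1 ((rd_unit_left hu).1 h2)

lemma trivR_twist {u a b : M} (hu : IsUnit u) (h : trivR a b) : trivR (a * u) (b * u) := by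
  intro t h1 h2
  obtain ⟨c, hc⟩ := h1
  obtain ⟨d, hd⟩ := h2
  have h1' : RD (t * uinv hu) a := by
    refine ⟨c, ?_⟩
    have : a * u * uinv hu = c * t * uinv hu := by rw [hc]
    rwa [mul_assoc a, mul_uinv hu, mul_one, mul_assoc] at this
  have h2' : RD (t * uinv hu) b := by
    refine ⟨d, ?_⟩
    have : b * u * uinv hu = d * t * uinv hu := by rw [hd]
    rwa [mul_assoc b, mul_uinv hu, mul_one, mul_assoc] at this
  have := h _ h1' h2'
  have h3 : IsUnit ((t * uinv hu) * u) := this.mul hu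
  rwa [mul_assoc, uinv_mul hu, mul_one] at h3

lemma trivL_unit_right {u b a : M} (hu : IsUnit u) (h : trivL b a) : trivL (b * u) a :=
  fun t h1 h2 => h t ((dvd_unit_right hu).1 h1) h2

lemma trivL_twist {u b a : M} (hu : IsUnit u) (h : trivL b a) : trivL (u * b) (u * a) := by
  intro t h1 h2
  obtain ⟨c, hc⟩ := h1
  obtain ⟨d, hd⟩ := h2
  have h1' : (uinv hu * t) ∣ b := by
    refine ⟨c, ?_⟩
    have : uinv hu * (u * b) = uinv hu * (t * c) := by rw [hc]
    rwa [← mul_assoc, uinv_mul hu, one_mul, ← mul_assoc] at this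
  have h2' : (uinv hu * t) ∣ a := by
    refine ⟨d, ?_⟩
    have : uinv hu * (u * a) = uinv hu * (t * d) := by rw [hd]
    rwa [← mul_assoc, uinv_mul hu, one_mul, ← mul_assoc] at this
  have := h _ h1' h2'
  have h3 : IsUnit (u * (uinv hu * t)) := hu.mul this
  rwa [← mul_assoc, mul_uinv hu, one_mul] at h3

variable (H : Hyp M)
include H

lemma trivR_mul_left {a b : M} (m : M) (ha : ¬ IsUnit a) (h : trivR a b) :
    trivR (m * a) b := by
  intro t h1 h2
  rcases rcomp H (m * a) h1 (RD.mul_left m (RD.refl a)) with hta | hat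
  · exact h t hta h2
  · obtain ⟨c, hc⟩ := hat
    obtain ⟨z, hz⟩ := h2
    exact absurd (h a ⟨1, (one_mul a).symm⟩ ⟨z * c, by rw [hz, hc, mul_assoc]⟩) ha

lemma trivL_mul_right {b a : M} (m : M) (hb : ¬ IsUnit b) (h : trivL b a) :
    trivL (b * m) a := by
  intro t h1 h2
  rcases comp H (b * m) h1 ⟨m, rfl⟩ with htb | hbt
  · exact h t htb h2
  · obtain ⟨c, hc⟩ := hbt
    obtain ⟨z, hz⟩ := h2
    exact absurd (h b dvd_rfl ⟨c * z, by rw [hz, hc, mul_assoc]⟩) hb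

lemma cgcdR_res (a b : M) :
    trivR (rq (cgcdR H a b) a) (rq (cgcdR H a b) b) := by
  intro t h1 h2
  obtain ⟨c, hc⟩ := h1
  obtain ⟨d, hd⟩ := h2
  set s := cgcdR H a b with hs
  have hts : RD (t * s) (cgcdR H a b) := by
    apply cgcdR_max H
    · exact ⟨c, by rw [rq_spec (cgcdR_rd1 H a b), hc, mul_assoc]⟩
    · exact ⟨d, by rw [rq_spec (cgcdR_rd2 H a b), hd, mul_assoc]⟩
  obtain ⟨z, hz⟩ := hts
  rw [← hs] at hz
  have h1' : (1 : M) * s = (z * t) * s := by rw [one_mul, mul_assoc, ← hz]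
  have := (H.rc _ _ _ h1').symm
  exact (units_pair H this).2

lemma cgcdL_res (a b : M) :
    trivL (lq (cgcdL H a b) a) (lq (cgcdL H a b) b) := by
  intro t h1 h2
  obtain ⟨c, hc⟩ := h1
  obtain ⟨d, hd⟩ := h2
  set g := cgcdL H a b with hg
  have hts : (g * t) ∣ (cgcdL H a b) := by
    apply cgcdL_max H
    · exact ⟨c, by rw [lq_spec (cgcdL_d1 H a b), hc, mul_assoc]⟩
    · exact ⟨d, by rw [lq_spec (cgcdL_d2 H a b), hd, mul_assoc]⟩
  obtain ⟨z, hz⟩ := hts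
  rw [← hg] at hz
  have h1' : g * 1 = g * (t * z) := by rw [mul_one, ← mul_assoc, ← hz]
  have := (H.lc _ _ _ h1').symm
  exact (units_pair H this).1

end Triv

section NFdef

/-- junction condition between adjacent syllables -/
def okJ : (Bool × M) → (Bool × M) → Prop
  | (true, a), (false, b) => trivR a b
  | (false, b), (true, a) => trivL b a
  | _, _ => False

/-- conditions on non-head syllables -/
def tOk (x : Bool × M) : Prop :=
  ¬ IsUnit x.2 ∧ (x.1 = true → cL x.2 = x.2) ∧ (x.1 = false → cR x.2 = x.2)

/-- conditions on the head syllable -/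
def hOk : List (Bool × M) → Prop
  | [] => True
  | [(true, m)] => m ≠ 1
  | [(false, m)] => ¬ IsUnit m
  | (_, m) :: _ :: _ => ¬ IsUnit m

/-- normal forms -/
def Ok (l : List (Bool × M)) : Prop :=
  l.Chain' okJ ∧ (∀ x ∈ l.tail, tOk x) ∧ hOk l

noncomputable def consP (y : M) : List (Bool × M) → List (Bool × M)
  | [] => if y = 1 then [] else [(true, y)]
  | (false, b) :: r =>
      if h : IsUnit y then (false, b * uinv h) :: r else (true, y) :: (false, b) :: r
  | l => (true, y) :: l

noncomputable def consM (y : M) : List (Bool × M) → List (Bool × M)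
  | (false, b) :: r => (false, b * y) :: r
  | l => (false, y) :: l

noncomputable def plusFront (y : M) : List (Bool × M) → List (Bool × M)
  | (true, a) :: r => consP (y * a) r
  | l => consP y l

variable (H : Hyp M)

/-- the action of `m ∈ M` on normal forms (prepending `m`) -/
noncomputable def pPos (m : M) : List (Bool × M) → List (Bool × M)
  | (false, b) :: r =>
      if hq : IsUnit (rq (cgcdR H m b) b) then
        plusFront (rq (cgcdR H m b) m * uinv hq) r
      else if hp : IsUnit (rq (cgcdR H m b) m) then
        consM (rq (cgcdR H m b) b * uinv hp) r
      else
        (true, rq (cgcdR H m b) m * twR (rq (cgcdR H m b) b)) ::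
          (false, cR (rq (cgcdR H m b) b)) :: r
  | l => plusFront m l

/-- the action of `m⁻¹` on normal forms (prepending `m⁻¹`) -/
noncomputable def pNeg (m : M) : List (Bool × M) → List (Bool × M)
  | [] => if h : IsUnit m then consP (uinv h) [] else [(false, m)]
  | (false, b) :: r => (false, b * m) :: r
  | (true, a) :: r =>
      if hm : IsUnit (lq (cgcdL H m a) m) then
        consP (uinv hm * lq (cgcdL H m a) a) r
      else if ha : IsUnit (lq (cgcdL H m a) a) then
        consM (uinv ha * lq (cgcdL H m a) m) r
      else
        (false, twL (lq (cgcdL H m a) a) * lq (cgcdL H m a) m) ::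
          (true, cL (lq (cgcdL H m a) a)) :: r

end NFdef

section NFlemmas

/-- "tail-normal" lists: every syllable satisfies the tail conditions -/
def TOk (l : List (Bool × M)) : Prop := l.Chain' okJ ∧ ∀ x ∈ l, tOk x

lemma hOk_cons2 (x y : Bool × M) (l : List (Bool × M)) :
    hOk (x :: y :: l) = ¬ IsUnit x.2 := by
  rcases x with ⟨(_|_), m⟩ <;> rfl

lemma hOk_single (ε : Bool) (m : M) :
    hOk [(ε, m)] = if ε then m ≠ 1 else ¬ IsUnit m := by
  cases ε <;> rfl

lemma TOk.ok {l : List (Bool × M)} (h : TOk l) : Ok l := by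
  refine ⟨h.1, fun x hx => h.2 x (List.mem_of_mem_tail hx), ?_⟩
  rcases l with _ | ⟨⟨ε, m⟩, r⟩
  · trivial
  · have hm := (h.2 (ε, m) (by simp)).1
    rcases r with _ | ⟨y, r'⟩
    · rw [hOk_single]
      cases ε
      · simpa using hm
      · simp only [if_true]
        intro hh; exact hm (by rw [hh]; exact isUnit_one)
    · rw [hOk_cons2]; exact hm

lemma okTail {x : Bool × M} {l : List (Bool × M)} (h : Ok (x :: l)) : TOk l :=
  ⟨h.1.tail, fun y hy => h.2.1 y hy⟩

lemma Ok.tail {x : Bool × M} {l : List (Bool × M)} (h : Ok (x :: l)) : Ok l :=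
  (okTail h).ok

lemma ok_nil : Ok ([] : List (Bool × M)) := ⟨List.isChain_nil, by simp, trivial⟩

lemma tok_nil : TOk ([] : List (Bool × M)) := ⟨List.isChain_nil, by simp⟩

lemma ok_single_pos {m : M} (h : m ≠ 1) : Ok [(true, m)] :=
  ⟨List.isChain_singleton _, by simp, h⟩

lemma ok_single_neg {b : M} (h : ¬ IsUnit b) : Ok [(false, b)] :=
  ⟨List.isChain_singleton _, by simp, h⟩

lemma ok_head_junction {x y : Bool × M} {l : List (Bool × M)} (h : Ok (x :: y :: l)) :
    okJ x y := (List.isChain_cons_cons.1 h.1).1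

lemma ok_head_nonunit {x y : Bool × M} {l : List (Bool × M)} (h : Ok (x :: y :: l)) :
    ¬ IsUnit x.2 := by
  have := h.2.2
  rwa [hOk_cons2] at this

lemma tok_cons {x : Bool × M} {l : List (Bool × M)} (hl : TOk l)
    (hx : tOk x) (hj : ∀ y, l.head? = some y → okJ x y) : TOk (x :: l) := by
  refine ⟨List.isChain_cons.2 ⟨hj, hl.1⟩, ?_⟩
  intro y hy
  rcases List.mem_cons.1 hy with rfl | hy
  · exact hx
  · exact hl.2 y hy

lemma ok_build {x : Bool × M} {l : List (Bool × M)} (hl : TOk l)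
    (hx : ¬ IsUnit x.2) (hj : ∀ y, l.head? = some y → okJ x y) : Ok (x :: l) := by
  refine ⟨List.isChain_cons.2 ⟨hj, hl.1⟩, fun y hy => hl.2 y hy, ?_⟩
  rcases l with _ | ⟨y, r⟩
  · rcases x with ⟨(_|_), m⟩
    · exact hx
    · rw [hOk_single]
      simp only [if_true]
      intro hh; exact hx (by show IsUnit m; rw [hh]; exact isUnit_one)
  · rw [hOk_cons2]; exact hx

@[simp] lemma consP_nil {y : M} : consP y [] = if y = 1 then [] else [(true, y)] := rfl

@[simp] lemma consP_false {y b : M} {r : List (Bool × M)} :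
    consP y ((false, b) :: r) =
      if h : IsUnit y then (false, b * uinv h) :: r else (true, y) :: (false, b) :: r := rfl

@[simp] lemma consP_true {y a : M} {r : List (Bool × M)} :
    consP y ((true, a) :: r) = (true, y) :: (true, a) :: r := rfl

@[simp] lemma consM_nil {y : M} : consM y [] = [(false, y)] := rfl

@[simp] lemma consM_false {y b : M} {r : List (Bool × M)} :
    consM y ((false, b) :: r) = (false, b * y) :: r := rfl

@[simp] lemma consM_true {y a : M} {r : List (Bool × M)} :
    consM y ((true, a) :: r) = (false, y) :: (true, a) :: r := rfl

@[simp] lemma plusFront_nil {y : M} : plusFront y [] = consP y [] := rfl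

@[simp] lemma plusFront_true {y a : M} {r : List (Bool × M)} :
    plusFront y ((true, a) :: r) = consP (y * a) r := rfl

@[simp] lemma plusFront_false {y b : M} {r : List (Bool × M)} :
    plusFront y ((false, b) :: r) = consP y ((false, b) :: r) := rfl

variable (H : Hyp M)

@[simp] lemma pPos_nil {m : M} : pPos H m [] = plusFront m [] := rfl

@[simp] lemma pPos_true {m a : M} {r : List (Bool × M)} :
    pPos H m ((true, a) :: r) = consP (m * a) r := rfl

lemma pPos_false {m b : M} {r : List (Bool × M)} :
    pPos H m ((false, b) :: r) =
      if hq : IsUnit (rq (cgcdR H m b) b) then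
        plusFront (rq (cgcdR H m b) m * uinv hq) r
      else if hp : IsUnit (rq (cgcdR H m b) m) then
        consM (rq (cgcdR H m b) b * uinv hp) r
      else
        (true, rq (cgcdR H m b) m * twR (rq (cgcdR H m b) b)) ::
          (false, cR (rq (cgcdR H m b) b)) :: r := rfl

@[simp] lemma pNeg_nil {m : M} :
    pNeg H m [] = if h : IsUnit m then consP (uinv h) [] else [(false, m)] := rfl

@[simp] lemma pNeg_false {m b : M} {r : List (Bool × M)} :
    pNeg H m ((false, b) :: r) = (false, b * m) :: r := rfl

lemma pNeg_true {m a : M} {r : List (Bool × M)} :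
    pNeg H m ((true, a) :: r) =
      if hm : IsUnit (lq (cgcdL H m a) m) then
        consP (uinv hm * lq (cgcdL H m a) a) r
      else if ha : IsUnit (lq (cgcdL H m a) a) then
        consM (uinv ha * lq (cgcdL H m a) m) r
      else
        (false, twL (lq (cgcdL H m a) a) * lq (cgcdL H m a) m) ::
          (true, cL (lq (cgcdL H m a) a)) :: r := rfl

include H

/-- identify the canonical right gcd and its quotients from a witness decomposition -/
lemma gcd_eval {m b p q s : M} (hm : m = p * s) (hb : b = q * s)
    (hmax : ∀ t, RD t m → RD t b → RD t s) :
    ∃ w, IsUnit w ∧ cgcdR H m b = w * s ∧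
      rq (cgcdR H m b) m * w = p ∧ rq (cgcdR H m b) b * w = q := by
  obtain ⟨w, hw, hws⟩ := cL_rel' s
  have h1 : RD (cL s) m := ⟨p * uinv hw, by
    rw [hws, ← mul_assoc, mul_assoc p, uinv_mul hw, mul_one]; exact hm⟩
  have h2 : RD (cL s) b := ⟨q * uinv hw, by
    rw [hws, ← mul_assoc, mul_assoc q, uinv_mul hw, mul_one]; exact hb⟩
  have h3 : ∀ t, RD t m → RD t b → RD t (cL s) := by
    intro t ht1 ht2
    obtain ⟨c, hc⟩ := hmax t ht1 ht2
    exact ⟨w * c, by rw [hws, hc, mul_assoc]⟩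
  have hgcd : cgcdR H m b = cL s := cgcdR_unique H h1 h2 h3 (cL_idem s)
  have hr1 : rq (cgcdR H m b) m = p * uinv hw := by
    apply rq_unique H (by rw [hgcd]; exact h1)
    rw [hgcd, hws, ← mul_assoc, mul_assoc p, uinv_mul hw, mul_one]; exact hm
  have hr2 : rq (cgcdR H m b) b = q * uinv hw := by
    apply rq_unique H (by rw [hgcd]; exact h2)
    rw [hgcd, hws, ← mul_assoc, mul_assoc q, uinv_mul hw, mul_one]; exact hb
  refine ⟨w, hw, by rw [hgcd, hws], ?_, ?_⟩
  · rw [hr1, mul_assoc, uinv_mul hw, mul_one]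
  · rw [hr2, mul_assoc, uinv_mul hw, mul_one]

/-- identify the canonical left gcd and its quotients from a witness decomposition -/
lemma gcdL_eval {m a m0 a0 s : M} (hm : m = s * m0) (ha : a = s * a0)
    (hmax : ∀ t, t ∣ m → t ∣ a → t ∣ s) :
    ∃ w, IsUnit w ∧ cgcdL H m a = s * w ∧
      w * lq (cgcdL H m a) m = m0 ∧ w * lq (cgcdL H m a) a = a0 := by
  obtain ⟨w, hw, hws⟩ := cR_rel' s
  have h1 : (cR s) ∣ m := ⟨uinv hw * m0, by
    rw [hws, mul_assoc, ← mul_assoc w, mul_uinv hw, one_mul]; exact hm⟩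
  have h2 : (cR s) ∣ a := ⟨uinv hw * a0, by
    rw [hws, mul_assoc, ← mul_assoc w, mul_uinv hw, one_mul]; exact ha⟩
  have h3 : ∀ t, t ∣ m → t ∣ a → t ∣ (cR s) := by
    intro t ht1 ht2
    obtain ⟨c, hc⟩ := hmax t ht1 ht2
    exact ⟨c * w, by rw [hws, hc, mul_assoc]⟩
  have hgcd : cgcdL H m a = cR s := cgcdL_unique H h1 h2 h3 (cR_idem s)
  have hr1 : lq (cgcdL H m a) m = uinv hw * m0 := by
    apply lq_unique H (by rw [hgcd]; exact h1)
    rw [hgcd, hws, mul_assoc, ← mul_assoc w, mul_uinv hw, one_mul]; exact hm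
  have hr2 : lq (cgcdL H m a) a = uinv hw * a0 := by
    apply lq_unique H (by rw [hgcd]; exact h2)
    rw [hgcd, hws, mul_assoc, ← mul_assoc w, mul_uinv hw, one_mul]; exact ha
  refine ⟨w, hw, by rw [hgcd, hws], ?_, ?_⟩
  · rw [hr1, ← mul_assoc, mul_uinv hw, one_mul]
  · rw [hr2, ← mul_assoc, mul_uinv hw, one_mul]

lemma isUnit_mul_unit_right {x u : M} (hu : IsUnit u) : IsUnit (x * u) ↔ IsUnit x :=
  ⟨fun h => isUnit_left H h, fun h => h.mul hu⟩

lemma isUnit_mul_unit_left {x u : M} (hu : IsUnit u) : IsUnit (u * x) ↔ IsUnit x :=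
  ⟨fun h => isUnit_right H h, fun h => hu.mul h⟩

end NFlemmas

section T1

lemma TOk.tail {x : Bool × M} {l : List (Bool × M)} (h : TOk (x :: l)) : TOk l :=
  ⟨h.1.tail, fun y hy => h.2 y (List.mem_cons_of_mem x hy)⟩

lemma tok_junction {x : Bool × M} {l : List (Bool × M)} (h : TOk (x :: l)) :
    ∀ z, l.head? = some z → okJ x z := (List.isChain_cons.1 h.1).1

lemma hj_cons {x y : Bool × M} {l : List (Bool × M)} (h : okJ x y) :
    ∀ z, ((y :: l).head? = some z) → okJ x z := by
  intro z hz
  rw [List.head?_cons, Option.some_inj] at hz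
  rwa [← hz]

lemma hj_nil {x : Bool × M} :
    ∀ z, (([] : List (Bool × M)).head? = some z) → okJ x z := by
  intro z hz; simp at hz

/-- quotient on the plus side keeps the junction trivial -/
lemma trivR_quot {a b d a' : M} (ha : a = d * a') (h : trivR a b) : trivR a' b :=
  fun t h1 h2 => h t (by rw [ha]; exact RD.mul_left d h1) h2

/-- quotient on the minus side keeps the junction trivial -/
lemma trivL_quot {b a q s : M} (hb : b = q * s) (h : trivL b a) : trivL q a :=
  fun t h1 h2 => h t (by rw [hb]; exact h1.mul_right s) h2

lemma okJ_unit_minus {c u : M} {z : Bool × M} (hu : IsUnit u) (h : okJ (false, c) z) :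
    okJ (false, c * u) z := by
  rcases z with ⟨(_|_), a⟩
  · exact absurd h (by simp [okJ])
  · exact trivL_unit_right hu h

lemma okJ_unit_plus {a u : M} {z : Bool × M} (hu : IsUnit u) (h : okJ (true, a) z) :
    okJ (true, u * a) z := by
  rcases z with ⟨(_|_), b⟩
  · exact trivR_unit_left hu h
  · exact absurd h (by simp [okJ])

variable (H : Hyp M)
include H

lemma nonunit_mul {m a : M} (h : ¬ IsUnit a) : ¬ IsUnit (m * a) :=
  fun hu => h (isUnit_right H hu)

lemma nonunit_mul' {m a : M} (h : ¬ IsUnit a) : ¬ IsUnit (a * m) :=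
  fun hu => h (isUnit_left H hu)

lemma okJ_mul_plus {a m : M} {z : Bool × M} (ha : ¬ IsUnit a) (h : okJ (true, a) z) :
    okJ (true, m * a) z := by
  rcases z with ⟨(_|_), b⟩
  · exact trivR_mul_left H m ha h
  · exact absurd h (by simp [okJ])

lemma okJ_mul_minus {c m : M} {z : Bool × M} (hc : ¬ IsUnit c) (h : okJ (false, c) z) :
    okJ (false, c * m) z := by
  rcases z with ⟨(_|_), a⟩
  · exact absurd h (by simp [okJ])
  · exact trivL_mul_right H m hc h

/-- `consP` maps tail-normal lists to normal forms. -/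
lemma ok_consP {y : M} {l : List (Bool × M)} (htail : TOk l)
    (hnt : ∀ a r, l ≠ (true, a) :: r)
    (hjun : ∀ b r, l = (false, b) :: r → trivR y b) : Ok (consP y l) := by
  rcases l with _ | ⟨⟨(_|_), c⟩, r⟩
  · rw [consP_nil]
    split
    · exact ok_nil
    · exact ok_single_pos (by assumption)
  · -- head (false, c)
    rw [consP_false]
    have hc : ¬ IsUnit c := (htail.2 (false, c) (by simp)).1
    split
    · -- y is a unit : merge into the minus syllable
      refine ok_build htail.tail ?_ ?_
      · exact fun hu => hc (isUnit_left H hu)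
      · intro z hz
        exact okJ_unit_minus (uinv_unit _) (tok_junction htail z hz)
    · -- y stays as a new plus syllable
      refine ok_build htail ?_ ?_
      · assumption
      · exact hj_cons (hjun c r rfl)
  · -- head (true, c) : excluded
    exact absurd rfl (hnt c r)

/-- `consM` maps tail-normal lists to normal forms. -/
lemma ok_consM {y : M} {l : List (Bool × M)} (htail : TOk l) (hy : ¬ IsUnit y)
    (hjun : ∀ a r, l = (true, a) :: r → trivL y a) : Ok (consM y l) := by
  rcases l with _ | ⟨⟨(_|_), c⟩, r⟩
  · exact ok_single_neg hy
  · -- head (false, c) : merge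
    rw [consM_false]
    have hc : ¬ IsUnit c := (htail.2 (false, c) (by simp)).1
    refine ok_build htail.tail (nonunit_mul' H hc) ?_
    intro z hz
    exact okJ_mul_minus H hc (tok_junction htail z hz)
  · -- head (true, c) : plain cons
    rw [consM_true]
    exact ok_build htail hy (hj_cons (hjun c r rfl))

omit H in
lemma ok_head_neg {b : M} {r : List (Bool × M)} (h : Ok ((false, b) :: r)) :
    ¬ IsUnit b := by
  rcases r with _ | ⟨y, r⟩
  · have := h.2.2
    rwa [hOk_single] at this
  · exact ok_head_nonunit h

omit H in
lemma okJ_false_false {b c : M} {r r' : List (Bool × M)}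
    (h : Ok ((false, b) :: (false, c) :: r)) : False := ok_head_junction h

omit H in
lemma okJ_true_true {b c : M} {r : List (Bool × M)}
    (h : Ok ((true, b) :: (true, c) :: r)) : False := ok_head_junction h

lemma okPos {m : M} {l : List (Bool × M)} (hl : Ok l) : Ok (pPos H m l) := by
  rcases l with _ | ⟨⟨(_|_), b⟩, r⟩
  · rw [pPos_nil, plusFront_nil]
    exact ok_consP H tok_nil (by simp) (by simp)
  · -- head (false, b)
    rw [pPos_false]
    have hbs : b = rq (cgcdR H m b) b * cgcdR H m b := rq_spec (cgcdR_rd2 H m b)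
    have hms : m = rq (cgcdR H m b) m * cgcdR H m b := rq_spec (cgcdR_rd1 H m b)
    have hres : trivR (rq (cgcdR H m b) m) (rq (cgcdR H m b) b) := cgcdR_res H m b
    split
    case isTrue hq =>
      rcases r with _ | ⟨⟨(_|_), a2⟩, r2⟩
      · rw [plusFront_nil]
        exact ok_consP H tok_nil (by simp) (by simp)
      · exact absurd (ok_head_junction hl) (by simp [okJ])
      · rw [plusFront_true]
        have ht2 : TOk ((true, a2) :: r2) := okTail hl
        have ha2 : ¬ IsUnit a2 := (ht2.2 (true, a2) (by simp)).1
        refine ok_consP H ht2.tail ?_ ?_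
        · intro a3 r3 hr
          subst hr
          exact absurd (tok_junction ht2 (true, a3) rfl) (by simp [okJ])
        · intro b3 r3 hr
          subst hr
          have hold : trivR a2 b3 := tok_junction ht2 (false, b3) rfl
          exact trivR_mul_left H _ ha2 hold
    case isFalse hq =>
      split
      case isTrue hp =>
        refine ok_consM H (okTail hl) ?_ ?_
        · rw [isUnit_mul_unit_right H (uinv_unit hp)]; exact hq
        · intro a2 r2 hr
          subst hr
          have hold : trivL b a2 := ok_head_junction hl
          exact trivL_unit_right (uinv_unit hp) (trivL_quot hbs hold)
      case isFalse hp =>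
        have htw := twR_unit (rq (cgcdR H m b) b)
        have hx2 : tOk (false, cR (rq (cgcdR H m b) b)) := by
          refine ⟨fun h => hq (isUnit_of_cR h), fun h => by simp at h, fun _ => cR_idem _⟩
        have htokr : TOk ((false, cR (rq (cgcdR H m b) b)) :: r) := by
          refine tok_cons (okTail hl) hx2 ?_
          intro z hz
          have hold : okJ (false, b) z := (List.isChain_cons.1 hl.1).1 z hz
          rcases z with ⟨(_|_), a2⟩
          · exact absurd hold (by simp [okJ])
          · -- trivL (cR q) a2
            intro t ht1 ht2
            rw [twR_spec, dvd_unit_right htw] at ht1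
            exact hold t (by rw [hbs]; exact ht1.mul_right _) ht2
        refine ok_build htokr ?_ ?_
        · show ¬ IsUnit (rq (cgcdR H m b) m * twR (rq (cgcdR H m b) b))
          rw [isUnit_mul_unit_right H htw]; exact hp
        · refine hj_cons ?_
          show trivR (rq (cgcdR H m b) m * twR (rq (cgcdR H m b) b)) (cR (rq (cgcdR H m b) b))
          rw [twR_spec]
          exact trivR_twist htw hres
  · -- head (true, b)
    rw [pPos_true]
    refine ok_consP H (okTail hl) ?_ ?_
    · intro a2 r2 hr
      subst hr
      exact absurd (ok_head_junction hl) (by simp [okJ])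
    · intro b2 r2 hr
      subst hr
      exact trivR_mul_left H _ (ok_head_nonunit hl) (ok_head_junction hl)

lemma okNeg {m : M} {l : List (Bool × M)} (hl : Ok l) : Ok (pNeg H m l) := by
  rcases l with _ | ⟨⟨(_|_), b⟩, r⟩
  · rw [pNeg_nil]
    split
    · exact ok_consP H tok_nil (by simp) (by simp)
    · exact ok_single_neg (by assumption)
  · -- head (false, b)
    rw [pNeg_false]
    refine ok_build (okTail hl) (nonunit_mul' H (ok_head_neg hl)) ?_
    intro z hz
    exact okJ_mul_minus H (ok_head_neg hl) ((List.isChain_cons.1 hl.1).1 z hz)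
  · -- head (true, b)  (here `b` is the plus-entry `a`)
    rw [pNeg_true]
    have has : b = cgcdL H m b * lq (cgcdL H m b) b := lq_spec (cgcdL_d2 H m b)
    have hres : trivL (lq (cgcdL H m b) m) (lq (cgcdL H m b) b) := cgcdL_res H m b
    split
    case isTrue hm' =>
      refine ok_consP H (okTail hl) ?_ ?_
      · intro a2 r2 hr
        subst hr
        exact absurd (ok_head_junction hl) (by simp [okJ])
      · intro b2 r2 hr
        subst hr
        exact trivR_unit_left (uinv_unit hm') (trivR_quot has (ok_head_junction hl))
    case isFalse hm' =>
      split
      case isTrue ha' =>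
        refine ok_consM H (okTail hl) ?_ ?_
        · rw [isUnit_mul_unit_left H (uinv_unit ha')]; exact hm'
        · intro a2 r2 hr
          subst hr
          exact absurd (ok_head_junction hl) (by simp [okJ])
      case isFalse ha' =>
        have htw := twL_unit (lq (cgcdL H m b) b)
        have hx2 : tOk (true, cL (lq (cgcdL H m b) b)) := by
          refine ⟨fun h => ha' (isUnit_of_cL h), fun _ => cL_idem _, fun h => by simp at h⟩
        have htokr : TOk ((true, cL (lq (cgcdL H m b) b)) :: r) := by
          refine tok_cons (okTail hl) hx2 ?_
          intro z hz
          have hold : okJ (true, b) z := (List.isChain_cons.1 hl.1).1 z hz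
          rcases z with ⟨(_|_), b2⟩
          · -- trivR (cL a') b2
            rw [show (okJ (true, cL (lq (cgcdL H m b) b)) (false, b2)) =
              trivR (cL (lq (cgcdL H m b) b)) b2 from rfl, twL_spec]
            exact trivR_unit_left htw (trivR_quot has hold)
          · exact absurd hold (by simp [okJ])
        refine ok_build htokr ?_ ?_
        · show ¬ IsUnit (twL (lq (cgcdL H m b) b) * lq (cgcdL H m b) m)
          rw [isUnit_mul_unit_left H htw]; exact hm'
        · refine hj_cons ?_
          show trivL (twL (lq (cgcdL H m b) b) * lq (cgcdL H m b) m)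
            (cL (lq (cgcdL H m b) b))
          rw [twL_spec]
          exact trivL_twist htw hres

end T1


section T2helpers
variable (H : Hyp M)
include H

lemma rd_unit_imp {t u : M} (h : RD t u) (hu : IsUnit u) : IsUnit t := by
  obtain ⟨c, hc⟩ := h
  rw [hc] at hu
  exact isUnit_right H hu

lemma dvd_unit_imp {t u : M} (h : t ∣ u) (hu : IsUnit u) : IsUnit t := by
  obtain ⟨c, hc⟩ := h
  rw [hc] at hu
  exact isUnit_left H hu

omit H in
lemma rd_one_of_unit {t : M} (h : IsUnit t) : RD t 1 := ⟨uinv h, (uinv_mul h).symm⟩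

lemma uinv_uinv {y : M} (h : IsUnit y) : uinv (uinv_unit h) = y :=
  (eq_uinv_of_mul_left H (uinv_unit h) (mul_uinv h)).symm

omit H in
lemma dvd_of_dvd_unit_mul {u t x : M} (hu : IsUnit u) (h : t ∣ u * x) :
    (uinv hu * t) ∣ x := by
  obtain ⟨c, hc⟩ := h
  refine ⟨c, ?_⟩
  rw [mul_assoc, ← hc, ← mul_assoc, uinv_mul hu, one_mul]

omit H in
lemma rd_of_rd_mul_unit {u t x : M} (hu : IsUnit u) (h : RD t (x * u)) :
    RD (t * uinv hu) x := by
  obtain ⟨c, hc⟩ := h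
  refine ⟨c, ?_⟩
  have : x * u * uinv hu = c * t * uinv hu := by rw [hc]
  rwa [mul_assoc x, mul_uinv hu, mul_one, mul_assoc] at this

omit H in
lemma rd_mul_right {t d a' : M} (h : RD t d) : RD (t * a') (d * a') := by
  obtain ⟨c, hc⟩ := h
  exact ⟨c, by rw [hc, mul_assoc]⟩

/-- master lemma: identify the gcd class on the right -/
lemma rmax_pattern {m Z d m' q0 : M} (hm : m = d * m') (hZ : Z = q0 * m')
    (hunit : ∀ t1, RD t1 d → RD t1 q0 → IsUnit t1) :
    ∀ t, RD t m → RD t Z → RD t m' := by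
  intro t h1 h2
  rcases rcomp H Z h2 ⟨q0, hZ⟩ with h | h
  · exact h
  · obtain ⟨t1, ht⟩ := h
    obtain ⟨z1, hz1⟩ := h1
    obtain ⟨z2, hz2⟩ := h2
    have h1' : RD t1 d := by
      refine ⟨z1, H.rc m' _ _ ?_⟩
      rw [← hm, hz1, ht, ← mul_assoc]
    have h2' : RD t1 q0 := by
      refine ⟨z2, H.rc m' _ _ ?_⟩
      rw [← hZ, hz2, ht, ← mul_assoc]
    have hu := hunit t1 h1' h2'
    refine ⟨uinv hu, ?_⟩
    rw [ht, ← mul_assoc, uinv_mul hu, one_mul]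

/-- master lemma: identify the gcd class on the left -/
lemma lmax_pattern {m V p0 s0 v0 : M} (hm : m = p0 * s0) (hV : V = p0 * v0)
    (hunit : ∀ t1, t1 ∣ s0 → t1 ∣ v0 → IsUnit t1) :
    ∀ t, t ∣ m → t ∣ V → t ∣ p0 := by
  intro t h1 h2
  rcases comp H V h2 ⟨v0, hV⟩ with h | h
  · exact h
  · obtain ⟨t1, ht⟩ := h
    obtain ⟨z1, hz1⟩ := h1
    obtain ⟨z2, hz2⟩ := h2
    have h1' : t1 ∣ s0 := by
      refine ⟨z1, H.lc p0 _ _ ?_⟩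
      rw [← hm, hz1, ht, mul_assoc]
    have h2' : t1 ∣ v0 := by
      refine ⟨z2, H.lc p0 _ _ ?_⟩
      rw [← hV, hz2, ht, mul_assoc]
    have hu := hunit t1 h1' h2'
    refine ⟨uinv hu, ?_⟩
    rw [ht, mul_assoc, mul_uinv hu, mul_one]

end T2helpers


section T2more

lemma unit_shift {w x y : M} (hw : IsUnit w) (h : w * x = y) : x = uinv hw * y := by
  rw [← h, ← mul_assoc, uinv_mul hw, one_mul]

lemma shift1 {w x : M} (hw : IsUnit w) (h2 : IsUnit (uinv hw * x)) : x * uinv h2 = w := by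
  calc x * uinv h2 = w * ((uinv hw * x) * uinv h2) := by
        rw [← mul_assoc, ← mul_assoc, mul_uinv hw, one_mul]
    _ = w := by rw [mul_uinv h2, mul_one]

lemma shiftR {w x y : M} (hw : IsUnit w) (h : x * w = y) : x = y * uinv hw := by
  rw [← h, mul_assoc, mul_uinv hw, mul_one]

lemma consP_eq_cons {y : M} (l : List (Bool × M)) (hy : ¬ IsUnit y) :
    consP y l = (true, y) :: l := by
  rcases l with _ | ⟨⟨(_|_), c⟩, r⟩
  · rw [consP_nil, if_neg (fun (h : y = 1) => hy (by rw [h]; exact isUnit_one))]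
  · rw [consP_false, dif_neg hy]
  · rw [consP_true]

end T2more

section T2

variable (H : Hyp M)
include H

lemma negPos {m : M} {l : List (Bool × M)} (hl : Ok l) : pNeg H m (pPos H m l) = l := by
  rcases l with _ | ⟨⟨(_|_), b⟩, r⟩
  · -- l = []
    rw [pPos_nil, plusFront_nil, consP_nil]
    by_cases h1 : m = 1
    · rw [if_pos h1]
      subst h1
      rw [pNeg_nil, dif_pos isUnit_one]
      have h2 : uinv (isUnit_one : IsUnit (1:M)) = 1 := by
        have := mul_uinv (isUnit_one : IsUnit (1:M))
        rwa [one_mul] at this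
      rw [consP_nil, if_pos h2]
    · rw [if_neg h1, pNeg_true]
      obtain ⟨w, hw, hgcd, he1, he2⟩ :=
        gcdL_eval H (m := m) (a := m) (mul_one m).symm (mul_one m).symm
          (fun t ht1 _ => ht1)
      have hq1 : lq (cgcdL H m m) m = uinv hw := by
        rw [unit_shift hw he1, mul_one]
      rw [hq1, dif_pos (uinv_unit hw), uinv_uinv H hw, mul_uinv hw, consP_nil, if_pos rfl]
  · -- l = (false, b) :: r
    rw [pPos_false]
    have hms : m = rq (cgcdR H m b) m * cgcdR H m b := rq_spec (cgcdR_rd1 H m b)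
    have hbs : b = rq (cgcdR H m b) b * cgcdR H m b := rq_spec (cgcdR_rd2 H m b)
    have hbnu : ¬ IsUnit b := ok_head_neg hl
    split
    case isTrue hq =>
      rcases r with _ | ⟨⟨(_|_), a2⟩, r2⟩
      · -- r = []
        rw [plusFront_nil, consP_nil]
        by_cases hv : rq (cgcdR H m b) m * uinv hq = 1
        · rw [if_pos hv, pNeg_nil]
          have hpq : rq (cgcdR H m b) m = rq (cgcdR H m b) b := by
            calc rq (cgcdR H m b) m
                = rq (cgcdR H m b) m * (uinv hq * rq (cgcdR H m b) b) := by
                  rw [uinv_mul hq, mul_one]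
              _ = (rq (cgcdR H m b) m * uinv hq) * rq (cgcdR H m b) b := by
                  rw [mul_assoc]
              _ = rq (cgcdR H m b) b := by rw [hv, one_mul]
          have hmb : m = b := hms.trans (by rw [hpq]; exact hbs.symm)
          rw [dif_neg (by rw [hmb]; exact hbnu), hmb]
        · rw [if_neg hv, pNeg_true]
          obtain ⟨w, hw, hgcd, he1, he2⟩ :=
            gcdL_eval H hms rfl
              (lmax_pattern H hms rfl (fun t1 _ ht2 => dvd_unit_imp H ht2 (uinv_unit hq)))
          have hlm := unit_shift hw he1
          have hlv := unit_shift hw he2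
          by_cases hsu : IsUnit (cgcdR H m b)
          · exact absurd (by rw [hbs]; exact hq.mul hsu) hbnu
          · rw [hlm, hlv]
            rw [dif_neg (by rw [isUnit_mul_unit_left H (uinv_unit hw)]; exact hsu)]
            rw [dif_pos ((uinv_unit hw).mul (uinv_unit hq))]
            rw [consM_nil]
            have h3 : (uinv hw * uinv hq) * (rq (cgcdR H m b) b * w) = 1 := by
              rw [mul_assoc (uinv hw), ← mul_assoc (uinv hq), uinv_mul hq, one_mul,
                uinv_mul hw]
            have h4 : rq (cgcdR H m b) b * w = uinv ((uinv_unit hw).mul (uinv_unit hq)) :=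
              eq_uinv_of_mul_right H _ h3
            rw [← h4]
            have hval : (rq (cgcdR H m b) b * w) * (uinv hw * cgcdR H m b) = b := by
              rw [mul_assoc, ← mul_assoc w, mul_uinv hw, one_mul, ← hbs]
            rw [hval]
      · -- r = (false, a2) :: r2 : impossible
        exact absurd (ok_head_junction hl) (by simp [okJ])
      · -- r = (true, a2) :: r2
        rw [plusFront_true]
        have ht2 := okTail hl
        have ha2 : ¬ IsUnit a2 := (ht2.2 (true, a2) (by simp)).1
        have hca2 : cL a2 = a2 := (ht2.2 (true, a2) (by simp)).2.1 rfl
        rw [consP_eq_cons _ (nonunit_mul H ha2), pNeg_true]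
        have hassoc : rq (cgcdR H m b) m * uinv hq * a2
            = rq (cgcdR H m b) m * (uinv hq * a2) := mul_assoc _ _ _
        have hunit : ∀ t1, t1 ∣ cgcdR H m b → t1 ∣ (uinv hq * a2) → IsUnit t1 := by
          intro t1 ht1 ht2'
          have h3 : (rq (cgcdR H m b) b * t1) ∣ a2 := by
            have h3' := dvd_of_dvd_unit_mul (uinv_unit hq) ht2'
            rwa [uinv_uinv H hq] at h3'
          have h4 : (rq (cgcdR H m b) b * t1) ∣ b := by
            obtain ⟨c, hc⟩ := ht1
            refine ⟨c, ?_⟩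
            calc b = rq (cgcdR H m b) b * cgcdR H m b := hbs
              _ = rq (cgcdR H m b) b * (t1 * c) :=
                  congrArg (fun z => rq (cgcdR H m b) b * z) hc
              _ = (rq (cgcdR H m b) b * t1) * c := (mul_assoc _ _ _).symm
          have h5 : trivL b a2 := ok_head_junction hl
          exact isUnit_right H (h5 _ h4 h3)
        obtain ⟨w, hw, hgcd, he1, he2⟩ :=
          gcdL_eval H hms hassoc (lmax_pattern H hms hassoc hunit)
        have hlm := unit_shift hw he1
        have hlv := unit_shift hw he2
        by_cases hsu : IsUnit (cgcdR H m b)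
        · exact absurd (by rw [hbs]; exact hq.mul hsu) hbnu
        · rw [hlm, hlv]
          rw [dif_neg (by rw [isUnit_mul_unit_left H (uinv_unit hw)]; exact hsu)]
          rw [dif_neg (by
            rw [isUnit_mul_unit_left H (uinv_unit hw), isUnit_mul_unit_left H (uinv_unit hq)]
            exact ha2)]
          have hclA : cL (uinv hw * (uinv hq * a2)) = a2 := by
            rw [cL_mul_unit _ (uinv_unit hw), cL_mul_unit _ (uinv_unit hq), hca2]
          have hT : twL (uinv hw * (uinv hq * a2)) = rq (cgcdR H m b) b * w := by
            apply H.rc (uinv hw * (uinv hq * a2))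
            rw [← twL_spec, hclA]
            rw [mul_assoc, ← mul_assoc w, mul_uinv hw, one_mul, ← mul_assoc,
              mul_uinv hq, one_mul]
          rw [hclA, hT]
          have hval : (rq (cgcdR H m b) b * w) * (uinv hw * cgcdR H m b) = b := by
            rw [mul_assoc, ← mul_assoc w, mul_uinv hw, one_mul, ← hbs]
          rw [hval]
    case isFalse hq =>
      split
      case isTrue hp =>
        have hval : (rq (cgcdR H m b) b * uinv hp) * m = b := by
          calc (rq (cgcdR H m b) b * uinv hp) * m
              = (rq (cgcdR H m b) b * uinv hp) * (rq (cgcdR H m b) m * cgcdR H m b) :=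
                congrArg (fun z => (rq (cgcdR H m b) b * uinv hp) * z) hms
            _ = rq (cgcdR H m b) b * ((uinv hp * rq (cgcdR H m b) m) * cgcdR H m b) := by
                rw [mul_assoc, ← mul_assoc (uinv hp)]
            _ = b := by rw [uinv_mul hp, one_mul, ← hbs]
        rcases r with _ | ⟨⟨(_|_), a2⟩, r2⟩
        · rw [consM_nil, pNeg_false, hval]
        · exact absurd (ok_head_junction hl) (by simp [okJ])
        · rw [consM_true, pNeg_false, hval]
      case isFalse hp =>
        rw [pNeg_true]
        have hunit : ∀ t1, t1 ∣ cgcdR H m b → t1 ∣ twR (rq (cgcdR H m b) b) → IsUnit t1 :=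
          fun t1 _ ht2 => dvd_unit_imp H ht2 (twR_unit _)
        obtain ⟨w, hw, hgcd, he1, he2⟩ :=
          gcdL_eval H hms rfl (lmax_pattern H hms rfl hunit)
        have hlm := unit_shift hw he1
        have hlv := unit_shift hw he2
        rw [hlm, hlv]
        by_cases hsu : IsUnit (cgcdR H m b)
        · have h1 : IsUnit (uinv hw * cgcdR H m b) := by
            rw [isUnit_mul_unit_left H (uinv_unit hw)]; exact hsu
          rw [dif_pos h1, consP_false]
          have hZ : IsUnit (uinv h1 * (uinv hw * twR (rq (cgcdR H m b) b))) :=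
            (uinv_unit h1).mul ((uinv_unit hw).mul (twR_unit _))
          rw [dif_pos hZ]
          have hsh : cgcdR H m b * uinv h1 = w := shift1 hw h1
          have hbZ : b * (uinv h1 * (uinv hw * twR (rq (cgcdR H m b) b)))
              = cR (rq (cgcdR H m b) b) := by
            calc b * (uinv h1 * (uinv hw * twR (rq (cgcdR H m b) b)))
                = (rq (cgcdR H m b) b * cgcdR H m b) *
                    (uinv h1 * (uinv hw * twR (rq (cgcdR H m b) b))) :=
                  congrArg
                    (fun z => z * (uinv h1 * (uinv hw * twR (rq (cgcdR H m b) b)))) hbs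
              _ = rq (cgcdR H m b) b *
                    ((cgcdR H m b * uinv h1) * (uinv hw * twR (rq (cgcdR H m b) b))) := by
                  rw [mul_assoc, ← mul_assoc (cgcdR H m b)]
              _ = cR (rq (cgcdR H m b) b) := by
                  rw [hsh, ← mul_assoc w, mul_uinv hw, one_mul, ← twR_spec]
          have hval : cR (rq (cgcdR H m b) b) * uinv hZ = b := by
            calc cR (rq (cgcdR H m b) b) * uinv hZ
                = (b * (uinv h1 * (uinv hw * twR (rq (cgcdR H m b) b)))) * uinv hZ := by
                  rw [hbZ]
              _ = b := by rw [mul_assoc, mul_uinv hZ, mul_one]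
          rw [hval]
        · rw [dif_neg (by rw [isUnit_mul_unit_left H (uinv_unit hw)]; exact hsu)]
          have h2 : IsUnit (uinv hw * twR (rq (cgcdR H m b) b)) :=
            (uinv_unit hw).mul (twR_unit _)
          rw [dif_pos h2, consM_false]
          have hsh2 : twR (rq (cgcdR H m b) b) * uinv h2 = w := shift1 hw h2
          have hval : cR (rq (cgcdR H m b) b) * (uinv h2 * (uinv hw * cgcdR H m b)) = b := by
            rw [twR_spec, mul_assoc, ← mul_assoc (twR (rq (cgcdR H m b) b)), hsh2,
              ← mul_assoc w, mul_uinv hw, one_mul, ← hbs]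
          rw [hval]
  · -- l = (true, b) :: r
    rw [pPos_true]
    have hane : b ≠ 1 := by
      rcases r with _ | ⟨y, r2⟩
      · have := hl.2.2; rwa [hOk_single] at this
      · intro hb1
        exact (ok_head_nonunit hl) (by rw [hb1]; exact isUnit_one)
    rcases r with _ | ⟨⟨(_|_), a2⟩, r2⟩
    · -- r = []
      rw [consP_nil]
      by_cases h1 : m * b = 1
      · rw [if_pos h1, pNeg_nil, dif_pos (units_pair H h1).1]
        rw [← eq_uinv_of_mul_right H (units_pair H h1).1 h1]
        rw [consP_nil, if_neg hane]
      · rw [if_neg h1, pNeg_true]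
        obtain ⟨w, hw, hgcd, he1, he2⟩ :=
          gcdL_eval H (m := m) (a := m * b) (mul_one m).symm rfl (fun t ht1 _ => ht1)
        have hq1 : lq (cgcdL H m (m * b)) m = uinv hw := by
          rw [unit_shift hw he1, mul_one]
        have hq2 : lq (cgcdL H m (m * b)) (m * b) = uinv hw * b := unit_shift hw he2
        rw [hq1, hq2, dif_pos (uinv_unit hw), uinv_uinv H hw, ← mul_assoc, mul_uinv hw,
          one_mul, consP_nil, if_neg hane]
    · -- r = (false, a2) :: r2
      have hbnu : ¬ IsUnit b := ok_head_nonunit hl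
      rw [consP_eq_cons _ (nonunit_mul H hbnu), pNeg_true]
      obtain ⟨w, hw, hgcd, he1, he2⟩ :=
        gcdL_eval H (m := m) (a := m * b) (mul_one m).symm rfl (fun t ht1 _ => ht1)
      have hq1 : lq (cgcdL H m (m * b)) m = uinv hw := by
        rw [unit_shift hw he1, mul_one]
      have hq2 : lq (cgcdL H m (m * b)) (m * b) = uinv hw * b := unit_shift hw he2
      rw [hq1, hq2, dif_pos (uinv_unit hw), uinv_uinv H hw, ← mul_assoc, mul_uinv hw,
        one_mul, consP_false, dif_neg hbnu]
    · -- r = (true, a2) :: r2 : impossible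
      exact absurd (ok_head_junction hl) (by simp [okJ])

end T2

section T2b
variable (H : Hyp M)
include H

lemma posNeg {m : M} {l : List (Bool × M)} (hl : Ok l) : pPos H m (pNeg H m l) = l := by
  rcases l with _ | ⟨⟨(_|_), b⟩, r⟩
  · -- l = []
    rw [pNeg_nil]
    split
    case isTrue h =>
      rw [consP_nil]
      by_cases h1 : uinv h = 1
      · have hm1 : m = 1 := by
          have h2 := mul_uinv h
          rwa [h1, mul_one] at h2
        rw [if_pos h1, pPos_nil, plusFront_nil, consP_nil, if_pos hm1]
      · rw [if_neg h1, pPos_true, mul_uinv h, consP_nil, if_pos rfl]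
    case isFalse h =>
      obtain ⟨w, hw, hgcd, he1, he2⟩ :=
        gcd_eval H (m := m) (b := m) (one_mul m).symm (one_mul m).symm (fun t ht _ => ht)
      have hqu : IsUnit (rq (cgcdR H m m) m) := (units_pair H he1).1
      rw [pPos_false, dif_pos hqu, plusFront_nil, consP_nil, if_pos (mul_uinv hqu)]
  · -- l = (false, b) :: r
    rw [pNeg_false, pPos_false]
    obtain ⟨w, hw, hgcd, he1, he2⟩ :=
      gcd_eval H (m := m) (b := b * m) (one_mul m).symm rfl (fun t ht _ => ht)
    have hp : IsUnit (rq (cgcdR H m (b * m)) m) := (units_pair H he1).1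
    have hbnu : ¬ IsUnit b := ok_head_neg hl
    have hqn : ¬ IsUnit (rq (cgcdR H m (b * m)) (b * m)) := by
      intro hu
      apply hbnu
      rw [← he2]
      exact hu.mul hw
    rw [dif_neg hqn, dif_pos hp]
    have huv : uinv hp = w := (eq_uinv_of_mul_right H hp he1).symm
    have hval : rq (cgcdR H m (b * m)) (b * m) * uinv hp = b := by rw [huv]; exact he2
    rw [hval]
    rcases r with _ | ⟨⟨(_|_), a2⟩, r2⟩
    · rw [consM_nil]
    · exact absurd (ok_head_junction hl) (by simp [okJ])
    · rw [consM_true]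
  · -- l = (true, b) :: r
    rw [pNeg_true]
    have hms : m = cgcdL H m b * lq (cgcdL H m b) m := lq_spec (cgcdL_d1 H m b)
    have has : b = cgcdL H m b * lq (cgcdL H m b) b := lq_spec (cgcdL_d2 H m b)
    have hane : b ≠ 1 := by
      rcases r with _ | ⟨y, r2⟩
      · have := hl.2.2; rwa [hOk_single] at this
      · intro hb1
        exact (ok_head_nonunit hl) (by rw [hb1]; exact isUnit_one)
    split
    case isTrue hm' =>
      have hmX : m * (uinv hm' * lq (cgcdL H m b) b) = b := by
        calc m * (uinv hm' * lq (cgcdL H m b) b)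
            = (cgcdL H m b * lq (cgcdL H m b) m) * (uinv hm' * lq (cgcdL H m b) b) :=
              congrArg (fun z => z * (uinv hm' * lq (cgcdL H m b) b)) hms
          _ = cgcdL H m b * ((lq (cgcdL H m b) m * uinv hm') * lq (cgcdL H m b) b) := by
              rw [mul_assoc, ← mul_assoc (lq (cgcdL H m b) m)]
          _ = b := by rw [mul_uinv hm', one_mul, ← has]
      rcases r with _ | ⟨⟨(_|_), a2⟩, r2⟩
      · -- r = []
        rw [consP_nil]
        by_cases h1 : uinv hm' * lq (cgcdL H m b) b = 1
        · have hmb : m = b := by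
            have h2 := hmX
            rwa [h1, mul_one] at h2
          rw [if_pos h1, pPos_nil, plusFront_nil, consP_nil,
            if_neg (fun hm1 => hane (hmb.symm.trans hm1)), hmb]
        · rw [if_neg h1, pPos_true, hmX, consP_nil, if_neg hane]
      · -- r = (false, a2) :: r2
        have hbnu : ¬ IsUnit b := ok_head_nonunit hl
        have ha2nu : ¬ IsUnit a2 := ((okTail hl).2 (false, a2) (by simp)).1
        have hca2 : cR a2 = a2 := ((okTail hl).2 (false, a2) (by simp)).2.2 rfl
        by_cases hXu : IsUnit (uinv hm' * lq (cgcdL H m b) b)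
        · -- merged case
          rw [consP_false, dif_pos hXu, pPos_false]
          have hmax : ∀ t, RD t m → RD t (a2 * uinv hXu) → RD t 1 := by
            intro t ht1 ht2
            have h3 : RD (t * (uinv hm' * lq (cgcdL H m b) b)) a2 := by
              have h4 := rd_of_rd_mul_unit (uinv_unit hXu) ht2
              rwa [uinv_uinv H hXu] at h4
            have h5 : RD (t * (uinv hm' * lq (cgcdL H m b) b)) b := by
              have h6 := rd_mul_right (a' := uinv hm' * lq (cgcdL H m b) b) ht1
              rwa [hmX] at h6
            have h7 : trivR b a2 := ok_head_junction hl
            exact rd_one_of_unit (isUnit_left H (h7 _ h5 h3))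
          obtain ⟨w, hw, hgcd, he1, he2⟩ :=
            gcd_eval H (mul_one m).symm (mul_one (a2 * uinv hXu)).symm hmax
          have hqn : ¬ IsUnit (rq (cgcdR H m (a2 * uinv hXu)) (a2 * uinv hXu)) := by
            intro hu
            apply ha2nu
            have h8 : IsUnit (rq (cgcdR H m (a2 * uinv hXu)) (a2 * uinv hXu) * w) :=
              hu.mul hw
            rw [he2] at h8
            exact isUnit_left H h8
          have hpn : ¬ IsUnit (rq (cgcdR H m (a2 * uinv hXu)) m) := by
            intro hu
            apply hbnu
            have h8 : IsUnit m := by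
              have h9 : IsUnit (rq (cgcdR H m (a2 * uinv hXu)) m * w) := hu.mul hw
              rwa [he1] at h9
            rw [has]
            have hd : IsUnit (cgcdL H m b) := by
              rw [hms] at h8
              exact isUnit_left H h8
            exact hd.mul (isUnit_right H hXu)
          rw [dif_neg hqn, dif_neg hpn]
          -- branch C values
          have hq2 : rq (cgcdR H m (a2 * uinv hXu)) (a2 * uinv hXu)
              = (a2 * uinv hXu) * uinv hw := shiftR hw he2
          have hcr : cR (rq (cgcdR H m (a2 * uinv hXu)) (a2 * uinv hXu)) = a2 := by
            rw [hq2, cR_mul_unit _ (uinv_unit hw), cR_mul_unit _ (uinv_unit hXu), hca2]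
          have htw : twR (rq (cgcdR H m (a2 * uinv hXu)) (a2 * uinv hXu))
              = w * (uinv hm' * lq (cgcdL H m b) b) := by
            apply H.lc (rq (cgcdR H m (a2 * uinv hXu)) (a2 * uinv hXu))
            rw [← twR_spec, hcr, hq2]
            rw [mul_assoc, ← mul_assoc (uinv hw), uinv_mul hw, one_mul, mul_assoc,
              uinv_mul hXu, mul_one]
          have hpv : rq (cgcdR H m (a2 * uinv hXu)) m
              * twR (rq (cgcdR H m (a2 * uinv hXu)) (a2 * uinv hXu)) = b := by
            rw [htw]
            have hp2 : rq (cgcdR H m (a2 * uinv hXu)) m = m * uinv hw := shiftR hw he1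
            rw [hp2, mul_assoc, ← mul_assoc (uinv hw), uinv_mul hw, one_mul, hmX]
          rw [hcr, hpv]
        · -- X nonunit
          rw [consP_eq_cons _ hXu, pPos_true, hmX, consP_false, dif_neg hbnu]
      · exact absurd (ok_head_junction hl) (by simp [okJ])
    case isFalse hm' =>
      split
      case isTrue ha' =>
        rcases r with _ | ⟨⟨(_|_), a2⟩, r2⟩
        · -- r = []
          rw [consM_nil, pPos_false]
          obtain ⟨w, hw, hgcd, he1, he2⟩ :=
            gcd_eval H hms rfl
              (rmax_pattern H hms rfl (fun t1 _ ht2 => rd_unit_imp H ht2 (uinv_unit ha')))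
          have hqu : IsUnit (rq (cgcdR H m (uinv ha' * lq (cgcdL H m b) m))
              (uinv ha' * lq (cgcdL H m b) m)) := by
            have h8 : IsUnit (rq (cgcdR H m (uinv ha' * lq (cgcdL H m b) m))
                (uinv ha' * lq (cgcdL H m b) m) * w) := by
              rw [he2]; exact uinv_unit ha'
            exact isUnit_left H h8
          rw [dif_pos hqu, plusFront_nil, consP_nil]
          have h6 : rq (cgcdR H m (uinv ha' * lq (cgcdL H m b) m))
              (uinv ha' * lq (cgcdL H m b) m) * (w * lq (cgcdL H m b) b) = 1 := by
            rw [← mul_assoc, he2, uinv_mul ha']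
          have h7 : w * lq (cgcdL H m b) b = uinv hqu := eq_uinv_of_mul_right H hqu h6
          have hv : rq (cgcdR H m (uinv ha' * lq (cgcdL H m b) m)) m * uinv hqu = b := by
            rw [← h7, ← mul_assoc, he1, ← has]
          rw [hv, if_neg hane]
        · -- r = (false, a2) :: r2
          have hbnu : ¬ IsUnit b := ok_head_nonunit hl
          have ha2nu : ¬ IsUnit a2 := ((okTail hl).2 (false, a2) (by simp)).1
          have hca2 : cR a2 = a2 := ((okTail hl).2 (false, a2) (by simp)).2.2 rfl
          rw [consM_false, pPos_false]
          have hassoc : a2 * (uinv ha' * lq (cgcdL H m b) m)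
              = (a2 * uinv ha') * lq (cgcdL H m b) m := (mul_assoc _ _ _).symm
          have hunit : ∀ t1, RD t1 (cgcdL H m b) → RD t1 (a2 * uinv ha') → IsUnit t1 := by
            intro t1 ht1 ht2
            have h3 : RD (t1 * lq (cgcdL H m b) b) b := by
              have h4 := rd_mul_right (a' := lq (cgcdL H m b) b) ht1
              rwa [← has] at h4
            have h4 : RD (t1 * lq (cgcdL H m b) b) a2 := by
              have h5 := rd_of_rd_mul_unit (uinv_unit ha') ht2
              rwa [uinv_uinv H ha'] at h5
            exact isUnit_left H ((ok_head_junction hl : trivR b a2) _ h3 h4)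
          obtain ⟨w, hw, hgcd, he1, he2⟩ :=
            gcd_eval H hms hassoc (rmax_pattern H hms hassoc hunit)
          have hqn : ¬ IsUnit (rq (cgcdR H m (a2 * (uinv ha' * lq (cgcdL H m b) m)))
              (a2 * (uinv ha' * lq (cgcdL H m b) m))) := by
            intro hu
            apply ha2nu
            have h8 := hu.mul hw
            rw [he2] at h8
            exact isUnit_left H h8
          have hpn : ¬ IsUnit (rq (cgcdR H m (a2 * (uinv ha' * lq (cgcdL H m b) m))) m) := by
            intro hu
            apply hbnu
            have h8 := hu.mul hw
            rw [he1] at h8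
            rw [has]
            exact h8.mul ha'
          rw [dif_neg hqn, dif_neg hpn]
          have hq2 := shiftR hw he2
          have hcr : cR (rq (cgcdR H m (a2 * (uinv ha' * lq (cgcdL H m b) m)))
              (a2 * (uinv ha' * lq (cgcdL H m b) m))) = a2 := by
            rw [hq2, cR_mul_unit _ (uinv_unit hw), cR_mul_unit _ (uinv_unit ha'), hca2]
          have htw : twR (rq (cgcdR H m (a2 * (uinv ha' * lq (cgcdL H m b) m)))
              (a2 * (uinv ha' * lq (cgcdL H m b) m)))
              = w * lq (cgcdL H m b) b := by
            apply H.lc (rq (cgcdR H m (a2 * (uinv ha' * lq (cgcdL H m b) m)))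
              (a2 * (uinv ha' * lq (cgcdL H m b) m)))
            rw [← twR_spec, hcr, hq2]
            rw [mul_assoc, ← mul_assoc (uinv hw), uinv_mul hw, one_mul, mul_assoc,
              uinv_mul ha', mul_one]
          have hpv : rq (cgcdR H m (a2 * (uinv ha' * lq (cgcdL H m b) m))) m
              * twR (rq (cgcdR H m (a2 * (uinv ha' * lq (cgcdL H m b) m)))
                  (a2 * (uinv ha' * lq (cgcdL H m b) m))) = b := by
            rw [htw]
            have hp2 := shiftR hw he1
            rw [hp2, mul_assoc, ← mul_assoc (uinv hw), uinv_mul hw, one_mul, ← has]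
          rw [hcr, hpv]
        · exact absurd (ok_head_junction hl) (by simp [okJ])
      case isFalse ha' =>
        rw [pPos_false]
        obtain ⟨w, hw, hgcd, he1, he2⟩ :=
          gcd_eval H hms rfl
            (rmax_pattern H hms rfl (fun t1 _ ht2 => rd_unit_imp H ht2 (twL_unit _)))
        have hqu : IsUnit (rq (cgcdR H m (twL (lq (cgcdL H m b) b) * lq (cgcdL H m b) m))
            (twL (lq (cgcdL H m b) b) * lq (cgcdL H m b) m)) := by
          have h8 := shiftR hw he2
          rw [h8]
          exact (twL_unit _).mul (uinv_unit hw)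
        rw [dif_pos hqu, plusFront_true]
        have h6 : rq (cgcdR H m (twL (lq (cgcdL H m b) b) * lq (cgcdL H m b) m))
            (twL (lq (cgcdL H m b) b) * lq (cgcdL H m b) m)
            * (w * uinv (twL_unit (lq (cgcdL H m b) b))) = 1 := by
          rw [← mul_assoc, he2, mul_uinv]
        have h7 : w * uinv (twL_unit (lq (cgcdL H m b) b)) = uinv hqu :=
          eq_uinv_of_mul_right H hqu h6
        have hv : (rq (cgcdR H m (twL (lq (cgcdL H m b) b) * lq (cgcdL H m b) m)) m
            * uinv hqu) * cL (lq (cgcdL H m b) b) = b := by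
          rw [← h7, twL_spec, ← mul_assoc, ← mul_assoc, he1, mul_assoc, mul_assoc,
            ← mul_assoc (uinv (twL_unit (lq (cgcdL H m b) b))), uinv_mul, one_mul, ← has]
        rw [hv]
        rcases r with _ | ⟨⟨(_|_), a2⟩, r2⟩
        · rw [consP_nil, if_neg hane]
        · rw [consP_false, dif_neg (ok_head_nonunit hl)]
        · exact absurd (ok_head_junction hl) (by simp [okJ])

end T2b

section T3
variable (H : Hyp M)

lemma consM_eq {y : M} {r : List (Bool × M)} (h : ∀ b r2, r ≠ (false, b) :: r2) :
    consM y r = (false, y) :: r := by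
  rcases r with _ | ⟨⟨(_|_), c⟩, r2⟩
  · rw [consM_nil]
  · exact absurd rfl (h c r2)
  · rw [consM_true]

include H

/-- the three-branch description of `pPos` on a minus-headed list, in terms of
any witness decomposition of the gcd -/
lemma pPos_eval {m X p0 q0 s0 : M} {r : List (Bool × M)}
    (hm : m = p0 * s0) (hb : X = q0 * s0)
    (hmax : ∀ t, RD t m → RD t X → RD t s0) :
    pPos H m ((false, X) :: r) =
      if hq : IsUnit q0 then plusFront (p0 * uinv hq) r
      else if hp : IsUnit p0 then consM (q0 * uinv hp) r
      else (true, p0 * twR q0) :: (false, cR q0) :: r := by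
  obtain ⟨w, hw, hgcd, he1, he2⟩ := gcd_eval H hm hb hmax
  rw [pPos_false]
  have hp' : rq (cgcdR H m X) m = p0 * uinv hw := shiftR hw he1
  have hq' : rq (cgcdR H m X) X = q0 * uinv hw := shiftR hw he2
  rw [hp', hq']
  by_cases hq : IsUnit q0
  · rw [dif_pos (hq.mul (uinv_unit hw)), dif_pos hq]
    have h6 : (q0 * uinv hw) * (w * uinv hq) = 1 := by
      rw [mul_assoc, ← mul_assoc (uinv hw), uinv_mul hw, one_mul, mul_uinv hq]
    have h7 : w * uinv hq = uinv (hq.mul (uinv_unit hw)) := eq_uinv_of_mul_right H _ h6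
    have hv : (p0 * uinv hw) * uinv (hq.mul (uinv_unit hw)) = p0 * uinv hq := by
      rw [← h7, mul_assoc, ← mul_assoc (uinv hw), uinv_mul hw, one_mul]
    rw [hv]
  · have hq2 : ¬ IsUnit (q0 * uinv hw) := by
      rw [isUnit_mul_unit_right H (uinv_unit hw)]; exact hq
    rw [dif_neg hq2, dif_neg hq]
    by_cases hp : IsUnit p0
    · rw [dif_pos (hp.mul (uinv_unit hw)), dif_pos hp]
      have h6 : (p0 * uinv hw) * (w * uinv hp) = 1 := by
        rw [mul_assoc, ← mul_assoc (uinv hw), uinv_mul hw, one_mul, mul_uinv hp]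
      have h7 : w * uinv hp = uinv (hp.mul (uinv_unit hw)) := eq_uinv_of_mul_right H _ h6
      have hv : (q0 * uinv hw) * uinv (hp.mul (uinv_unit hw)) = q0 * uinv hp := by
        rw [← h7, mul_assoc, ← mul_assoc (uinv hw), uinv_mul hw, one_mul]
      rw [hv]
    · have hp2 : ¬ IsUnit (p0 * uinv hw) := by
        rw [isUnit_mul_unit_right H (uinv_unit hw)]; exact hp
      rw [dif_neg hp2, dif_neg hp]
      have hcr : cR (q0 * uinv hw) = cR q0 := cR_mul_unit _ (uinv_unit hw)
      have htw : twR (q0 * uinv hw) = w * twR q0 := by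
        apply H.lc (q0 * uinv hw)
        rw [← twR_spec, hcr, twR_spec, mul_assoc q0, ← mul_assoc (uinv hw),
          uinv_mul hw, one_mul]
      have hv : (p0 * uinv hw) * twR (q0 * uinv hw) = p0 * twR q0 := by
        rw [htw, mul_assoc, ← mul_assoc (uinv hw), uinv_mul hw, one_mul]
      rw [hcr, htw, ← mul_assoc (p0 * uinv hw) w, mul_assoc p0 (uinv hw) w,
        uinv_mul hw, mul_one]

lemma plusFront_comm (m v : M) {r : List (Bool × M)}
    (hnf : ∀ b r2, r ≠ (false, b) :: r2)
    (hnu : ∀ a2 r2, r = (true, a2) :: r2 → ¬ IsUnit a2) :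
    pPos H m (plusFront v r) = plusFront (m * v) r := by
  rcases r with _ | ⟨⟨(_|_), a2⟩, r2⟩
  · rw [plusFront_nil, plusFront_nil, consP_nil]
    by_cases hv : v = 1
    · rw [if_pos hv, pPos_nil, plusFront_nil, hv, mul_one]
    · rw [if_neg hv, pPos_true]
  · exact absurd (hnf a2 r2) (by simp)
  · have ha2 := hnu a2 r2 rfl
    rw [plusFront_true, consP_eq_cons _ (nonunit_mul H ha2), pPos_true,
      plusFront_true, mul_assoc]

end T3

section T3b
variable (H : Hyp M)
include H

lemma posMul {m n : M} {l : List (Bool × M)} (hl : Ok l) :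
    pPos H (m * n) l = pPos H m (pPos H n l) := by
  rcases l with _ | ⟨⟨(_|_), b⟩, r⟩
  · -- l = []
    by_cases hn : n = 1
    · have e0 : pPos H n [] = [] := by
        show consP n [] = []
        rw [consP_nil, if_pos hn]
      rw [e0, hn, mul_one]
    · have e1 : pPos H n [] = [(true, n)] := by
        show consP n [] = _
        rw [consP_nil, if_neg hn]
      rw [e1, pPos_true]
      rfl
  · -- l = (false, b) :: r
    have hn : n = rq (cgcdR H n b) n * cgcdR H n b := rq_spec (cgcdR_rd1 H n b)
    have hb : b = rq (cgcdR H n b) b * cgcdR H n b := rq_spec (cgcdR_rd2 H n b)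
    have hres : trivR (rq (cgcdR H n b) n) (rq (cgcdR H n b) b) := cgcdR_res H n b
    have hnf : ∀ b2 r2, r ≠ (false, b2) :: r2 := by
      intro b2 r2 hr
      subst hr
      exact absurd (ok_head_junction hl) (by simp [okJ])
    have hnu2 : ∀ a2 r2, r = (true, a2) :: r2 → ¬ IsUnit a2 := by
      intro a2 r2 hr
      subst hr
      exact ((okTail hl).2 (true, a2) (by simp)).1
    set s := cgcdR H n b with hsdef
    set p := rq s n with hpdef
    set q := rq s b with hqdef
    rw [pPos_false (m := n)]
    split
    case isTrue hq =>
      have hmn : m * n = (m * p) * s := by rw [hn, ← mul_assoc]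
      have hmax1 : ∀ t, RD t (m * n) → RD t b → RD t s := by
        intro t _ h2
        rw [hb] at h2
        exact (rd_unit_left hq).1 h2
      rw [pPos_eval H hmn hb hmax1, dif_pos hq,
        plusFront_comm H m (p * uinv hq) hnf hnu2, ← mul_assoc]
    case isFalse hq =>
      split
      case isTrue hp =>
        rw [consM_eq hnf]
        have hm2 : m = rq (cgcdR H m (q * uinv hp)) m * cgcdR H m (q * uinv hp) :=
          rq_spec (cgcdR_rd1 H m (q * uinv hp))
        have hb2 : q * uinv hp
            = rq (cgcdR H m (q * uinv hp)) (q * uinv hp) * cgcdR H m (q * uinv hp) :=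
          rq_spec (cgcdR_rd2 H m (q * uinv hp))
        set s2 := cgcdR H m (q * uinv hp) with hs2def
        set p2 := rq s2 m with hp2def
        set q2 := rq s2 (q * uinv hp) with hq2def
        rw [pPos_eval H hm2 hb2 (fun t h1 h2 => cgcdR_max H h1 h2)]
        have hmn : m * n = p2 * (s2 * (p * s)) := by
          calc m * n = (p2 * s2) * (p * s) := by rw [← hm2, ← hn]
            _ = p2 * (s2 * (p * s)) := mul_assoc _ _ _
        have hbb : b = q2 * (s2 * (p * s)) := by
          have hq3 : q = (q2 * s2) * p := by
            rw [← hb2, mul_assoc, uinv_mul hp, mul_one]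
          calc b = q * s := hb
            _ = ((q2 * s2) * p) * s := by rw [hq3]
            _ = (q2 * s2) * (p * s) := mul_assoc _ _ _
            _ = q2 * (s2 * (p * s)) := mul_assoc _ _ _
        have hmax2 : ∀ t, RD t (m * n) → RD t b → RD t (s2 * (p * s)) := by
          intro t h1 h2
          rcases rcomp H b h2 (show RD s b from ⟨q, hb⟩) with hts | hst
          · obtain ⟨c, hc⟩ := hts
            refine ⟨s2 * (p * c), ?_⟩
            rw [hc, mul_assoc, mul_assoc]
          · obtain ⟨t1, ht1⟩ := hst
            obtain ⟨z, hz⟩ := h1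
            have hz1 : z * t1 = m * p := by
              apply H.rc s
              calc (z * t1) * s = z * (t1 * s) := mul_assoc _ _ _
                _ = z * t := by rw [← ht1]
                _ = m * n := hz.symm
                _ = (m * p) * s := by rw [hn, ← mul_assoc]
            obtain ⟨y, hy⟩ := h2
            have hy1 : y * t1 = q := by
              apply H.rc s
              calc (y * t1) * s = y * (t1 * s) := mul_assoc _ _ _
                _ = y * t := by rw [← ht1]
                _ = b := hy.symm
                _ = q * s := hb
            have hc1 : RD (t1 * uinv hp) m := by
              refine ⟨z, ?_⟩
              calc m = (m * p) * uinv hp := by rw [mul_assoc, mul_uinv hp, mul_one]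
                _ = (z * t1) * uinv hp := by rw [hz1]
                _ = z * (t1 * uinv hp) := mul_assoc _ _ _
            have hc2 : RD (t1 * uinv hp) (q * uinv hp) := by
              refine ⟨y, ?_⟩
              rw [← hy1, mul_assoc]
            have hc3 : RD (t1 * uinv hp) s2 := cgcdR_max H hc1 hc2
            obtain ⟨c, hc⟩ := hc3
            refine ⟨c, ?_⟩
            rw [ht1, hc]
            calc (c * (t1 * uinv hp)) * (p * s)
                = c * ((t1 * uinv hp) * (p * s)) := mul_assoc _ _ _
              _ = c * (((t1 * uinv hp) * p) * s) := by rw [← mul_assoc (t1 * uinv hp)]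
              _ = c * ((t1 * (uinv hp * p)) * s) := by rw [mul_assoc t1]
              _ = c * ((t1 * 1) * s) := by rw [uinv_mul hp]
              _ = c * (t1 * s) := by rw [mul_one]
        rw [pPos_eval H hmn hbb hmax2]
      case isFalse hp =>
        rw [pPos_true]
        have hmn : m * n = (m * p) * s := by rw [hn, ← mul_assoc]
        have hmax3 : ∀ t, RD t (m * n) → RD t b → RD t s := by
          intro t h1 h2
          rcases rcomp H b h2 (show RD s b from ⟨q, hb⟩) with hts | hst
          · exact hts
          · obtain ⟨t1, ht1⟩ := hst
            obtain ⟨z, hz⟩ := h1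
            have hz1 : z * t1 = m * p := by
              apply H.rc s
              calc (z * t1) * s = z * (t1 * s) := mul_assoc _ _ _
                _ = z * t := by rw [← ht1]
                _ = m * n := hz.symm
                _ = (m * p) * s := by rw [hn, ← mul_assoc]
            obtain ⟨y, hy⟩ := h2
            have hy1 : y * t1 = q := by
              apply H.rc s
              calc (y * t1) * s = y * (t1 * s) := mul_assoc _ _ _
                _ = y * t := by rw [← ht1]
                _ = b := hy.symm
                _ = q * s := hb
            rcases rcomp H (m * p) ⟨z, hz1.symm⟩ (⟨m, rfl⟩ : RD p (m * p)) with h4 | h4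
            · have hu : IsUnit t1 := hres t1 h4 ⟨y, hy1.symm⟩
              exact ⟨uinv hu, by rw [ht1, ← mul_assoc, uinv_mul hu, one_mul]⟩
            · obtain ⟨t2, ht2⟩ := h4
              have hpq : RD p q := by
                refine ⟨y * t2, ?_⟩
                rw [← hy1, ht2, mul_assoc]
              exact absurd (hres p (RD.refl p) hpq) hp
        rw [pPos_eval H hmn hb hmax3, dif_neg hq]
        by_cases hmp : IsUnit (m * p)
        · rw [dif_pos hmp]
          have hU : IsUnit (m * (p * twR q)) := by
            rw [← mul_assoc]
            exact hmp.mul (twR_unit q)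
          rw [consP_false, dif_pos hU, consM_eq hnf]
          have hval : q * uinv hmp = cR q * uinv hU := by
            apply H.rc (m * (p * twR q))
            calc (q * uinv hmp) * (m * (p * twR q))
                = (q * uinv hmp) * ((m * p) * twR q) := by rw [← mul_assoc m p]
              _ = ((q * uinv hmp) * (m * p)) * twR q := by rw [← mul_assoc]
              _ = (q * (uinv hmp * (m * p))) * twR q := by rw [mul_assoc q]
              _ = (q * 1) * twR q := by rw [uinv_mul hmp]
              _ = q * twR q := by rw [mul_one]
              _ = cR q := (twR_spec q).symm
              _ = cR q * (uinv hU * (m * (p * twR q))) := by rw [uinv_mul hU, mul_one]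
              _ = (cR q * uinv hU) * (m * (p * twR q)) := by rw [← mul_assoc]
          rw [hval]
        · rw [dif_neg hmp]
          have hUn : ¬ IsUnit (m * (p * twR q)) := by
            intro hu
            apply hmp
            rw [← mul_assoc] at hu
            exact isUnit_left H hu
          rw [consP_false, dif_neg hUn, ← mul_assoc]
  · -- l = (true, b) :: r
    rw [pPos_true, pPos_true]
    rcases r with _ | ⟨⟨(_|_), a2⟩, r2⟩
    · by_cases h1 : n * b = 1
      · have e1 : consP (n * b) ([] : List (Bool × M)) = [] := by
          rw [consP_nil, if_pos h1]
        rw [e1, pPos_nil, plusFront_nil, mul_assoc, h1, mul_one]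
      · have e1 : consP (n * b) ([] : List (Bool × M)) = [(true, n * b)] := by
          rw [consP_nil, if_neg h1]
        rw [e1, pPos_true, mul_assoc]
    · have hbnu : ¬ IsUnit b := ok_head_nonunit hl
      rw [consP_eq_cons _ (nonunit_mul H (m := n) hbnu), pPos_true, mul_assoc]
    · exact absurd (ok_head_junction hl) (by simp [okJ])

end T3b

section Final

/-- The type of normal forms. -/
def NF (M : Type u) [Monoid M] : Type u := {l : List (Bool × M) // Ok l}

variable (H : Hyp M)

noncomputable def act (m : M) : NF M ≃ NF M where
  toFun x := ⟨pPos H m x.1, okPos H x.2⟩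
  invFun x := ⟨pNeg H m x.1, okNeg H x.2⟩
  left_inv x := Subtype.ext (negPos H x.2)
  right_inv x := Subtype.ext (posNeg H x.2)

noncomputable def emb : M →* Equiv.Perm (NF M) :=
  MonoidHom.mk' (fun m => act H m) (fun a b => by
    refine Equiv.ext fun x => ?_
    show act H (a * b) x = (act H a * act H b) x
    rw [Equiv.Perm.mul_apply]
    exact Subtype.ext (posMul H x.2))

lemma emb_inj : Function.Injective (emb H) := by
  intro a b hab
  have h1 : pPos H a [] = pPos H b [] :=
    congrArg (fun f : Equiv.Perm (NF M) => (f ⟨[], ok_nil⟩).1) hab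
  have h2 : consP a ([] : List (Bool × M)) = consP b [] := h1
  rw [consP_nil, consP_nil] at h2
  by_cases ha : a = 1 <;> by_cases hb : b = 1
  · rw [ha, hb]
  · rw [if_pos ha, if_neg hb] at h2
    exact absurd h2 (by simp)
  · rw [if_neg ha, if_pos hb] at h2
    exact absurd h2 (by simp)
  · rw [if_neg ha, if_neg hb] at h2
    simpa using h2

end Final

end Rees

/-- every Rees monoid (cancellative, right rigid, with each principal right
ideal contained in only finitely many principal right ideals) embeds in a group. -/
theorem stmt11 (M : Type u) [Monoid M]
    (hlc : ∀ a b c : M, a * b = a * c → b = c)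
    (hrc : ∀ a b c : M, b * a = c * a → b = c)
    (hrigid : ∀ a b : M, (prIdeal a ∩ prIdeal b).Nonempty →
      prIdeal a ⊆ prIdeal b ∨ prIdeal b ⊆ prIdeal a)
    (hfin : ∀ a : M, {S : Set M | (∃ b : M, S = prIdeal b) ∧ prIdeal a ⊆ S}.Finite) :
    ∃ (Γ : Type u) (_ : Group Γ) (f : M →* Γ), Function.Injective f := by
  have H : Rees.Hyp M := ⟨hlc, hrc, hrigid, hfin⟩
  exact ⟨Equiv.Perm (Rees.NF M), inferInstance, Rees.emb H, Rees.emb_inj H⟩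
end

section
/- Let (G, X) be a self-similar group action. There exist maps A : G × FG(X) → FG(X) and R : G × FG(X) → G satisfying the axioms (SS1)–(SS8) with the free group FG(X) in place of X*, and extending the given action and restriction (that is, A(g, ι(u)) = ι(g·u) and R(g, ι(u)) = g|_u for all g ∈ G and u ∈ X*), if and only if the action is symmetric. -/
/-!
Extending the action and restriction to `FG(X)` amounts to letting each `w ∈ FG(X)` act on
`FG(X) × G` by `(v, g) ↦ (v · A(g, w), R(g, w))`: by (SS3)–(SS6) this is an antihomomorphism
into the permutations commuting with left multiplication on `FG(X)`. For a letter `x` the map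
is `(v, g) ↦ (v · ι(g·x), g|_x)`, a permutation precisely when `ρ_x` is bijective, and the
universal property of `FG(X)` produces the extension; conversely `R(·, x⁻¹)` inverts `ρ_x`.
(SS1) with (SS7), and (SS2) with (SS8), say that the pair `(w ↦ w, trivial)` with states in
`Unit`, resp. the composite `(A(g, A(h, ·)), (R(g, A(h, ·)), R(h, ·)))` with states in `G × G`,
is compatible with `(A, R)` along `_ ↦ 1`, resp. `(g, h) ↦ g h`. Compatibility passes from `w`
to `w⁻¹` and to products, so it only has to be checked on letters, where it is the
corresponding axiom for `X*`.
-/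

universe u v w

open Function (Bijective)
open Equiv (Perm)

-- Maps obeying (SS3)–(SS6) for inputs in `W`, outputs in `F` and states in `S`.
structure Transducer (S W F : Type*) [Monoid W] [Monoid F] where
  act : S → W → F
  res : S → W → S
  act_one : ∀ s, act s 1 = 1
  act_mul : ∀ s x y, act s (x * y) = act s x * act (res s x) y
  res_one : ∀ s, res s 1 = s
  res_mul : ∀ s x y, res s (x * y) = res (res s x) y

namespace Transducer

variable {S S' S₁ S₂ V W F : Type*}

section Monoid

variable [Monoid V] [Monoid W] [Monoid F]

def id : Transducer Unit W W where
  act _ w := w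
  res _ _ := ()
  act_one _ := rfl
  act_mul _ _ _ := rfl
  res_one _ := rfl
  res_mul _ _ _ := rfl

def comp (T₁ : Transducer S₁ W F) (T₂ : Transducer S₂ V W) :
    Transducer (S₁ × S₂) V F where
  act s w := T₁.act s.1 (T₂.act s.2 w)
  res s w := (T₁.res s.1 (T₂.act s.2 w), T₂.res s.2 w)
  act_one s := by rw [T₂.act_one, T₁.act_one]
  act_mul s x y := by rw [T₂.act_mul, T₁.act_mul]
  res_one s := by rw [T₂.act_one, T₁.res_one, T₂.res_one]
  res_mul s x y := by rw [T₂.act_mul, T₁.res_mul, T₂.res_mul]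

def IsMorphismAt (π : S' → S) (T' : Transducer S' W F) (T : Transducer S W F) (w : W) : Prop :=
  ∀ s, T'.act s w = T.act (π s) w ∧ π (T'.res s w) = T.res (π s) w

variable {π : S' → S} {T' : Transducer S' W F} {T : Transducer S W F}

theorem isMorphismAt_one : IsMorphismAt π T' T 1 :=
  fun s => ⟨by rw [T'.act_one, T.act_one], by rw [T'.res_one, T.res_one]⟩

theorem IsMorphismAt.mul {x y : W} (hx : IsMorphismAt π T' T x) (hy : IsMorphismAt π T' T y) :
    IsMorphismAt π T' T (x * y) := by
  intro s
  obtain ⟨hx_act, hx_res⟩ := hx s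
  obtain ⟨hy_act, hy_res⟩ := hy (T'.res s x)
  rw [T'.act_mul, T.act_mul, T'.res_mul, T.res_mul, hx_act, hy_act, hy_res, hx_res]
  exact ⟨rfl, rfl⟩

end Monoid

section Group

variable [Group W]

section

variable [Monoid F]

theorem res_res_inv (T : Transducer S W F) (s : S) (w : W) : T.res (T.res s w) w⁻¹ = s := by
  rw [← T.res_mul, mul_inv_cancel, T.res_one]

theorem res_inv_res (T : Transducer S W F) (s : S) (w : W) : T.res (T.res s w⁻¹) w = s := by
  simpa using T.res_res_inv s w⁻¹

theorem bijective_res (T : Transducer S W F) (w : W) : Bijective (T.res · w) :=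
  Function.bijective_iff_has_inverse.2
    ⟨(T.res · w⁻¹), (T.res_res_inv · w), (T.res_inv_res · w)⟩

end

variable [Group F]

theorem act_res_inv (T : Transducer S W F) (s : S) (w : W) :
    T.act (T.res s w) w⁻¹ = (T.act s w)⁻¹ := by
  refine eq_inv_of_mul_eq_one_right ?_
  rw [← T.act_mul, mul_inv_cancel, T.act_one]

variable {π : S' → S} {T' : Transducer S' W F} {T : Transducer S W F}

theorem IsMorphismAt.inv {w : W} (h : IsMorphismAt π T' T w) : IsMorphismAt π T' T w⁻¹ := by
  intro s
  obtain ⟨t, rfl⟩ := (T'.bijective_res w).2 s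
  obtain ⟨h_act, h_res⟩ := h t
  dsimp only
  rw [T'.act_res_inv, T'.res_res_inv, h_res, T.act_res_inv, T.res_res_inv, h_act]
  exact ⟨rfl, rfl⟩

theorem isMorphismAt_of_forall_of {X : Type*} {T' : Transducer S' (FreeGroup X) F}
    {T : Transducer S (FreeGroup X) F} (h : ∀ x, IsMorphismAt π T' T (.of x)) (w : FreeGroup X) :
    IsMorphismAt π T' T w := by
  induction w with
  | C1 => exact isMorphismAt_one
  | of x => exact h x
  | inv_of x hx => exact hx.inv
  | mul x y hx hy => exact hx.mul hy

end Group

end Transducer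

def leftMulEquivariantPerms (F S : Type*) [Group F] : Subgroup (Perm (F × S)) where
  carrier := {σ | ∀ (v : F) (p : F × S), σ (v * p.1, p.2) = (v * (σ p).1, (σ p).2)}
  one_mem' _ _ := rfl
  mul_mem' {σ τ} hσ hτ v p := by
    simp only [Perm.mul_apply, hτ v p, hσ v (τ p)]
  inv_mem' {σ} hσ v p := by
    rw [Perm.inv_eq_iff_eq, hσ v (σ⁻¹ p), Perm.coe_inv, Equiv.apply_symm_apply]

namespace leftMulEquivariantPerms

variable {F S : Type*} [Group F]

theorem apply_eq {σ : Perm (F × S)} (hσ : σ ∈ leftMulEquivariantPerms F S) (p : F × S) :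
    σ p = (p.1 * (σ (1, p.2)).1, (σ (1, p.2)).2) := by
  simpa using hσ p.1 (1, p.2)

def twist (c : S → F) (e : S ≃ S) : leftMulEquivariantPerms F S :=
  ⟨{ toFun p := (p.1 * c p.2, e p.2)
     invFun p := (p.1 * (c (e.symm p.2))⁻¹, e.symm p.2)
     left_inv p := by simp
     right_inv p := by simp }, fun v p => by simp [mul_assoc]⟩

end leftMulEquivariantPerms

namespace Transducer

variable {S W F : Type*} [Monoid W] [Group F]

def ofEquivariantHom (Φ : W →* (leftMulEquivariantPerms F S)ᵐᵒᵖ) : Transducer S W F where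
  act s w := ((Φ w).unop : Perm (F × S)) (1, s) |>.1
  res s w := ((Φ w).unop : Perm (F × S)) (1, s) |>.2
  act_one s := by simp
  act_mul s x y := by
    simp only [map_mul, MulOpposite.unop_mul, Subgroup.coe_mul, Perm.mul_apply]
    rw [leftMulEquivariantPerms.apply_eq (Φ y).unop.2]
  res_one s := by simp
  res_mul s x y := by
    simp only [map_mul, MulOpposite.unop_mul, Subgroup.coe_mul, Perm.mul_apply]
    rw [leftMulEquivariantPerms.apply_eq (Φ y).unop.2]

end Transducer

namespace SelfSimilarAction

variable {G : Type u} [Group G] {X : Type v} (A : SelfSimilarAction G X)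

local notation "ι" => FreeMonoid.lift FreeGroup.of

def IsExtension (T : Transducer G (FreeGroup X) (FreeGroup X)) : Prop :=
  ∀ g u, T.act g (ι u) = ι (A.act g u) ∧ T.res g (ι u) = A.res g u

noncomputable def letterPerm (hA : ∀ x : X, Bijective fun g : G => A.res g (FreeMonoid.of x))
    (x : X) : leftMulEquivariantPerms (FreeGroup X) G :=
  leftMulEquivariantPerms.twist (fun g => ι (A.act g (.of x))) (Equiv.ofBijective _ (hA x))

noncomputable def freeGroupExtension
    (hA : ∀ x : X, Bijective fun g : G => A.res g (FreeMonoid.of x)) :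
    Transducer G (FreeGroup X) (FreeGroup X) :=
  .ofEquivariantHom (FreeGroup.lift fun x => .op (A.letterPerm hA x))

variable {A}

theorem isExtension_of_forall_of {T : Transducer G (FreeGroup X) (FreeGroup X)}
    (h : ∀ g x, T.act g (.of x) = ι (A.act g (.of x)) ∧ T.res g (.of x) = A.res g (.of x)) :
    A.IsExtension T := by
  intro g u
  induction u using FreeMonoid.inductionOn' generalizing g with
  | one => simp [T.act_one, T.res_one, A.act_one, A.res_one]
  | of_mul x u ih =>
    obtain ⟨hx_act, hx_res⟩ := h g x
    obtain ⟨ih_act, ih_res⟩ := ih (A.res g (.of x))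
    rw [map_mul, FreeMonoid.lift_eval_of, T.act_mul, T.res_mul, hx_act, hx_res, ih_act, ih_res,
      A.act_mul, A.res_mul, map_mul]
    exact ⟨rfl, rfl⟩

namespace IsExtension

variable {T : Transducer G (FreeGroup X) (FreeGroup X)}

theorem act_of (hT : A.IsExtension T) (g : G) (x : X) : T.act g (.of x) = ι (A.act g (.of x)) :=
  (hT g (.of x)).1

theorem res_of (hT : A.IsExtension T) (g : G) (x : X) : T.res g (.of x) = A.res g (.of x) :=
  (hT g (.of x)).2

theorem one_act_and_one_res (hT : A.IsExtension T) (w : FreeGroup X) :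
    T.act 1 w = w ∧ T.res 1 w = 1 := by
  have hletter (x : X) : Transducer.IsMorphismAt (fun _ => 1) Transducer.id T (.of x) :=
    fun _ => by simp [Transducer.id, hT.act_of, hT.res_of, A.one_act, A.one_res]
  obtain ⟨h_act, h_res⟩ := Transducer.isMorphismAt_of_forall_of hletter w ()
  exact ⟨h_act.symm, h_res.symm⟩

theorem mul_act_and_mul_res (hT : A.IsExtension T) (g h : G) (w : FreeGroup X) :
    T.act (g * h) w = T.act g (T.act h w) ∧
      T.res (g * h) w = T.res g (T.act h w) * T.res h w := by
  have hletter (x : X) :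
      Transducer.IsMorphismAt (fun p : G × G => p.1 * p.2) (T.comp T) T (.of x) := by
    rintro ⟨g, h⟩
    simp only [Transducer.comp, hT.act_of, hT.res_of, (hT _ _).1, (hT _ _).2, A.mul_act,
      A.mul_res, and_self]
  obtain ⟨h_act, h_res⟩ := Transducer.isMorphismAt_of_forall_of hletter w (g, h)
  exact ⟨h_act.symm, h_res.symm⟩

end IsExtension

theorem isExtension_freeGroupExtension
    (hA : ∀ x : X, Bijective fun g : G => A.res g (FreeMonoid.of x)) :
    A.IsExtension (A.freeGroupExtension hA) :=
  isExtension_of_forall_of fun g x => by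
    simp [freeGroupExtension, Transducer.ofEquivariantHom, letterPerm,
      leftMulEquivariantPerms.twist]

end SelfSimilarAction

/-- the action and restriction of a self-similar group action extend to maps
`A : G × FG(X) → FG(X)` and `R : G × FG(X) → G` satisfying (SS1)–(SS8) iff the action is
symmetric (each `ρ_x`, `x ∈ X`, is bijective). -/
theorem stmt12 (G : Type u) [Group G] (X : Type v) (A : SelfSimilarAction G X) :
    (∃ (Aext : G → FreeGroup X → FreeGroup X) (Rext : G → FreeGroup X → G),
      (∀ x : FreeGroup X, Aext 1 x = x) ∧
      (∀ (g h : G) (x : FreeGroup X), Aext (g * h) x = Aext g (Aext h x)) ∧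
      (∀ g : G, Aext g 1 = 1) ∧
      (∀ (g : G) (x y : FreeGroup X), Aext g (x * y) = Aext g x * Aext (Rext g x) y) ∧
      (∀ g : G, Rext g 1 = g) ∧
      (∀ (g : G) (x y : FreeGroup X), Rext g (x * y) = Rext (Rext g x) y) ∧
      (∀ x : FreeGroup X, Rext (1 : G) x = 1) ∧
      (∀ (g h : G) (x : FreeGroup X), Rext (g * h) x = Rext g (Aext h x) * Rext h x) ∧
      (∀ (g : G) (u : FreeMonoid X),
        Aext g (FreeMonoid.lift FreeGroup.of u) = FreeMonoid.lift FreeGroup.of (A.act g u)) ∧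
      (∀ (g : G) (u : FreeMonoid X),
        Rext g (FreeMonoid.lift FreeGroup.of u) = A.res g u)) ↔
    (∀ x : X, Function.Bijective fun g : G => A.res g (FreeMonoid.of x)) := by
  constructor
  · rintro ⟨act, res, -, -, act_one, act_mul, res_one, res_mul, -, -, -, h_res⟩ x
    let T : Transducer G (FreeGroup X) (FreeGroup X) :=
      ⟨act, res, act_one, act_mul, res_one, res_mul⟩
    convert T.bijective_res (.of x) using 2 with g
    exact (h_res g (.of x)).symm
  · intro hA
    have hT := A.isExtension_freeGroupExtension hA
    set T := A.freeGroupExtension hA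
    exact ⟨T.act, T.res, fun w => (hT.one_act_and_one_res w).1,
      fun g h w => (hT.mul_act_and_mul_res g h w).1, T.act_one, T.act_mul, T.res_one, T.res_mul,
      fun w => (hT.one_act_and_one_res w).2, fun g h w => (hT.mul_act_and_mul_res g h w).2,
      fun g u => (hT g u).1, fun g u => (hT g u).2⟩
end

section
/- Let (G, X) be a self-similar group action such that G is finite and the action of G on X is transitive (for all x, y ∈ X there exists g ∈ G with g·x = y). If ρ_x : G → G is bijective for some letter x ∈ X, then ρ_u is bijective for every word u ∈ X*. -/
universe u v w

/-! Since `ρ_{uv} = ρ_v ∘ ρ_u` (SS6), it suffices to treat letters. If `g · x = y`, then (SS8) gives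
`ρ_y k = ρ_x (k g) · (ρ_x g)⁻¹`, so `ρ_y` is `ρ_x` composed on both sides with right translations
of `G`, and transitivity carries bijectivity from `x` to every letter. -/

namespace SelfSimilarAction

variable {G : Type u} [Group G] {X : Type v} (A : SelfSimilarAction G X)

theorem bijective_res_one : Function.Bijective fun g : G => A.res g 1 := by
  simp only [A.res_one]
  exact Function.bijective_id

theorem bijective_res_mul {u v : FreeMonoid X} (hu : Function.Bijective fun g : G => A.res g u)
    (hv : Function.Bijective fun g : G => A.res g v) :
    Function.Bijective fun g : G => A.res g (u * v) := by
  simp only [A.res_mul]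
  exact hv.comp hu

theorem res_eq_of_act_eq {g : G} {u v : FreeMonoid X} (h : A.act g u = v) (k : G) :
    A.res k v = A.res (k * g) u * (A.res g u)⁻¹ := by
  rw [A.mul_res, h, mul_inv_cancel_right]

theorem bijective_res_of_act_eq {g : G} {u v : FreeMonoid X} (h : A.act g u = v)
    (hu : Function.Bijective fun k : G => A.res k u) :
    Function.Bijective fun k : G => A.res k v := by
  simp only [A.res_eq_of_act_eq h]
  exact ((Equiv.mulRight (A.res g u)⁻¹).bijective.comp hu).comp (Equiv.mulRight g).bijective

end SelfSimilarAction

theorem stmt14_general (G : Type u) [Group G] (X : Type v) (A : SelfSimilarAction G X)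
    (htrans : ∀ x y : X, ∃ g : G, A.act g (FreeMonoid.of x) = FreeMonoid.of y)
    (x : X) (hx : Function.Bijective fun g : G => A.res g (FreeMonoid.of x)) :
    ∀ u : FreeMonoid X, Function.Bijective fun g : G => A.res g u := by
  have hletter (y : X) : Function.Bijective fun g : G => A.res g (FreeMonoid.of y) := by
    obtain ⟨g, hg⟩ := htrans x y
    exact A.bijective_res_of_act_eq hg hx
  intro u
  induction u using FreeMonoid.recOn with
  | one => exact A.bijective_res_one
  | of_mul y u ih => exact A.bijective_res_mul (hletter y) ih

/-- if `G` is finite and acts transitively on `X`, and `ρ_x` is bijective for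
some letter `x ∈ X`, then `ρ_u` is bijective for every word `u ∈ X*`. -/
theorem stmt14 (G : Type u) [Group G] [Finite G] (X : Type v) (A : SelfSimilarAction G X)
    (htrans : ∀ x y : X, ∃ g : G, A.act g (FreeMonoid.of x) = FreeMonoid.of y)
    (x : X) (hx : Function.Bijective fun g : G => A.res g (FreeMonoid.of x)) :
    ∀ u : FreeMonoid X, Function.Bijective fun g : G => A.res g u :=
  stmt14_general G X A htrans x hx
end
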